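/- arXiv:2108.06391 — 8 statements merged into one kernel-verified Lean document; each statement's English description precedes it below -/
import Mathlib

section
/- Let U be a random variable taking values in the open interval (0,1). Then U is uniformly distributed on (0,1) if and only if E[(2U−1)·1{U ≥ t}] − t(1−t) = 0 for every t ∈ (0,1). -/
/-!
If `U` has law `μ`, the hypothesis says that the tail integrals `∫_{[t,∞)} (2x - 1) dμ` agree
with those of the uniform law `λ` on `(0,1)` for `t ∈ (0,1)`; letting `t ↓ 0` shows that the total
integrals agree too, so the tails agree for every `t`. Since `|2x - 1| = 2 (2x - 1) 1{x ≥ 1/2} - (2x - 1)`,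
the tails of `|2x - 1|` agree as well, hence the finite measures `|2x - 1| μ` and `|2x - 1| λ`
coincide. Dividing by the density, `μ = λ` away from `1/2`, and `μ` has no atom at `1/2` because
both are probability measures.
-/

open MeasureTheory Set Filter Topology

section

variable {α : Type*} [MeasurableSpace α]

theorem MeasureTheory.Measure.restrict_eq_of_withDensity_eq {m₁ m₂ : Measure α}
    {φ : α → ENNReal} (hφ : Measurable φ) (hφ_top : ∀ x, φ x ≠ ⊤)
    (h : m₁.withDensity φ = m₂.withDensity φ) :
    m₁.restrict {x | φ x ≠ 0} = m₂.restrict {x | φ x ≠ 0} := by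
  have hs : MeasurableSet {x | φ x ≠ 0} := hφ (measurableSet_singleton 0).compl
  have recover (m : Measure α) : m.restrict {x | φ x ≠ 0} =
      ((m.withDensity φ).restrict {x | φ x ≠ 0}).withDensity fun x ↦ (φ x)⁻¹ := by
    rw [restrict_withDensity hs, withDensity_inv_same (μ := m.restrict {x | φ x ≠ 0}) hφ
      (ae_restrict_mem hs) (ae_of_all _ hφ_top)]
  rw [recover m₁, recover m₂, h]

theorem MeasureTheory.Measure.eq_of_restrict_compl_eq_of_measure_eq_zero {m₁ m₂ : Measure α}
    [IsFiniteMeasure m₁] {s : Set α} (hs : MeasurableSet s) (huniv : m₁ univ = m₂ univ)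
    (hcompl : m₁.restrict sᶜ = m₂.restrict sᶜ) (hs₂ : m₂ s = 0) : m₁ = m₂ := by
  have : IsFiniteMeasure m₂ := ⟨huniv ▸ measure_lt_top m₁ univ⟩
  have hs₁ : m₁ s = 0 := by
    have hsc : m₁ sᶜ = m₂ sᶜ := by
      simpa only [Measure.restrict_apply_univ] using congrArg (· univ) hcompl
    rw [← compl_compl s, measure_compl hs.compl (measure_ne_top _ _), hsc, huniv,
      ← measure_compl hs.compl (measure_ne_top _ _), compl_compl, hs₂]
  rw [← Measure.restrict_add_restrict_compl (μ := m₁) hs,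
    ← Measure.restrict_add_restrict_compl (μ := m₂) hs, Measure.restrict_eq_zero.2 hs₁,
    Measure.restrict_eq_zero.2 hs₂, hcompl]

end

section

variable {μ : Measure ℝ}

theorem tendsto_setIntegral_Ici_nhdsGT {E : Type*} [NormedAddCommGroup E] [NormedSpace ℝ E]
    {f : ℝ → E} {a : ℝ} (hf : Integrable f μ) (ha : ∀ᵐ x ∂μ, a < x) :
    Tendsto (fun t ↦ ∫ x in Ici t, f x ∂μ) (𝓝[>] a) (𝓝 (∫ x, f x ∂μ)) := by
  simp_rw [← integral_indicator measurableSet_Ici]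
  refine tendsto_integral_filter_of_dominated_convergence (fun x ↦ ‖f x‖)
    (Eventually.of_forall fun _ ↦ hf.aestronglyMeasurable.indicator measurableSet_Ici)
    (Eventually.of_forall fun _ ↦ ae_of_all _ fun _ ↦ norm_indicator_le_norm_self _ _) hf.norm ?_
  filter_upwards [ha] with x hx
  refine tendsto_const_nhds.congr' ?_
  filter_upwards [Ioc_mem_nhdsGT hx] with t ht
  exact (indicator_of_mem (mem_Ici.2 ht.2) f).symm

theorem integral_eq_of_setIntegral_Ici_eq {f g : ℝ → ℝ} {a b : ℝ} (hab : a < b)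
    (hf : Integrable f μ) (ha : ∀ᵐ x ∂μ, a < x) (hg : ContinuousWithinAt g (Ioi a) a)
    (h : ∀ t ∈ Ioo a b, ∫ x in Ici t, f x ∂μ = g t) :
    ∫ x, f x ∂μ = g a := by
  refine tendsto_nhds_unique (tendsto_setIntegral_Ici_nhdsGT hf ha) (hg.tendsto.congr' ?_)
  filter_upwards [Ioo_mem_nhdsGT hab] with t ht using (h t ht).symm

theorem setIntegral_Ici_abs_eq {f : ℝ → ℝ} {c : ℝ} (hf : Integrable f μ)
    (hf_nonneg : ∀ x, c ≤ x → 0 ≤ f x) (hf_nonpos : ∀ x, x < c → f x ≤ 0) (t : ℝ) :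
    ∫ x in Ici t, |f x| ∂μ = 2 * ∫ x in Ici (max t c), f x ∂μ - ∫ x in Ici t, f x ∂μ := by
  have habs (x : ℝ) : |f x| = 2 * (Ici c).indicator f x - f x := by
    by_cases hx : c ≤ x
    · rw [indicator_of_mem (mem_Ici.2 hx), abs_of_nonneg (hf_nonneg x hx)]; ring
    · rw [indicator_of_notMem (mem_Ici.not.2 hx), abs_of_nonpos (hf_nonpos x (not_le.1 hx))]
      ring
  simp_rw [habs]
  rw [integral_sub ((hf.indicator measurableSet_Ici).integrableOn.const_mul 2) hf.integrableOn,
    integral_const_mul, setIntegral_indicator measurableSet_Ici, Ici_inter_Ici]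

end

theorem withDensity_ofReal_eq_of_setIntegral_Ici_eq {m₁ m₂ : Measure ℝ} {g : ℝ → ℝ}
    (hg : 0 ≤ g) (hg₁ : Integrable g m₁) (hg₂ : Integrable g m₂)
    (h : ∀ t, ∫ x in Ici t, g x ∂m₁ = ∫ x in Ici t, g x ∂m₂) :
    m₁.withDensity (fun x ↦ ENNReal.ofReal (g x)) =
      m₂.withDensity (fun x ↦ ENNReal.ofReal (g x)) := by
  have := isFiniteMeasure_withDensity_ofReal hg₁.2
  refine Measure.ext_of_Ici _ _ fun t ↦ ?_
  rw [withDensity_apply _ measurableSet_Ici, withDensity_apply _ measurableSet_Ici,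
    ← ofReal_integral_eq_lintegral_ofReal hg₁.restrict (ae_of_all _ hg),
    ← ofReal_integral_eq_lintegral_ofReal hg₂.restrict (ae_of_all _ hg), h]

theorem setIntegral_Ici_eq_of_ae_mem_Ioo {m₁ m₂ : Measure ℝ} {f : ℝ → ℝ} {a b : ℝ}
    (h₁ : ∀ᵐ x ∂m₁, x ∈ Ioo a b) (h₂ : ∀ᵐ x ∂m₂, x ∈ Ioo a b)
    (htotal : ∫ x, f x ∂m₁ = ∫ x, f x ∂m₂)
    (h : ∀ t ∈ Ioo a b, ∫ x in Ici t, f x ∂m₁ = ∫ x in Ici t, f x ∂m₂) (t : ℝ) :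
    ∫ x in Ici t, f x ∂m₁ = ∫ x in Ici t, f x ∂m₂ := by
  rcases le_or_gt t a with hta | hat
  · have hall {m : Measure ℝ} (hm : ∀ᵐ x ∂m, x ∈ Ioo a b) : m.restrict (Ici t) = m :=
      Measure.restrict_eq_self_of_ae_mem (hm.mono fun x hx ↦ hta.trans hx.1.le)
    rw [hall h₁, hall h₂, htotal]
  rcases lt_or_ge t b with htb | hbt
  · exact h t ⟨hat, htb⟩
  · have hnull {m : Measure ℝ} (hm : ∀ᵐ x ∂m, x ∈ Ioo a b) : m.restrict (Ici t) = 0 :=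
      Measure.restrict_eq_zero.2 (measure_eq_zero_iff_ae_notMem.2
        (hm.mono fun x hx hxt ↦ (hx.2.trans_le hbt).not_ge hxt))
    rw [hnull h₁, hnull h₂]

theorem setIntegral_Ici_volume_Ioo {t : ℝ} (ht : t ∈ Icc (0 : ℝ) 1) :
    ∫ x in Ici t, (2 * x - 1) ∂(volume.restrict (Ioo (0 : ℝ) 1)) = t * (1 - t) := by
  rw [setIntegral_congr_set Ioi_ae_eq_Ici.symm, Measure.restrict_restrict measurableSet_Ioi,
    Ioi_inter_Ioo, max_eq_left ht.1, ← integral_Ioc_eq_integral_Ioo,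
    ← intervalIntegral.integral_of_le ht.2,
    intervalIntegral.integral_sub (intervalIntegral.intervalIntegrable_id.const_mul 2)
      intervalIntegrable_const, intervalIntegral.integral_const_mul, integral_id,
    intervalIntegral.integral_const, smul_eq_mul]
  ring

theorem eq_volume_restrict_Ioo_iff {μ : Measure ℝ} [IsProbabilityMeasure μ]
    (hμ : ∀ᵐ x ∂μ, x ∈ Ioo (0 : ℝ) 1) :
    μ = volume.restrict (Ioo 0 1) ↔
      ∀ t ∈ Ioo (0 : ℝ) 1, ∫ x in Ici t, (2 * x - 1) ∂μ = t * (1 - t) := by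
  set L := volume.restrict (Ioo (0 : ℝ) 1)
  have hL_tail (t : ℝ) (ht : t ∈ Ioo (0 : ℝ) 1) : ∫ x in Ici t, (2 * x - 1) ∂L = t * (1 - t) :=
    setIntegral_Ici_volume_Ioo (Ioo_subset_Icc_self ht)
  refine ⟨fun hμL ↦ hμL ▸ hL_tail, fun h ↦ ?_⟩
  have hL : ∀ᵐ x ∂L, x ∈ Ioo (0 : ℝ) 1 := ae_restrict_mem measurableSet_Ioo
  have : IsFiniteMeasure L := by unfold L; infer_instance
  have hint {m : Measure ℝ} [IsFiniteMeasure m] (hm : ∀ᵐ x ∂m, x ∈ Ioo (0 : ℝ) 1) :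
      Integrable (fun x ↦ 2 * x - 1) m :=
    Integrable.of_bound (by fun_prop) 1 (hm.mono fun x hx ↦ by
      rw [Real.norm_eq_abs, abs_le]; constructor <;> linarith [hx.1, hx.2])
  have htotal {m : Measure ℝ} [IsFiniteMeasure m] (hm : ∀ᵐ x ∂m, x ∈ Ioo (0 : ℝ) 1)
      (hm_tail : ∀ t ∈ Ioo (0 : ℝ) 1, ∫ x in Ici t, (2 * x - 1) ∂m = t * (1 - t)) :
      ∫ x, (2 * x - 1) ∂m = 0 := by
    have hcont : Continuous fun t : ℝ ↦ t * (1 - t) := by fun_prop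
    simpa using integral_eq_of_setIntegral_Ici_eq zero_lt_one (hint hm) (hm.mono fun x hx ↦ hx.1)
      hcont.continuousWithinAt hm_tail
  have htail := setIntegral_Ici_eq_of_ae_mem_Ioo hμ hL
    ((htotal hμ h).trans (htotal hL hL_tail).symm) fun t ht ↦ (h t ht).trans (hL_tail t ht).symm
  have hnonneg (x : ℝ) (hx : 1 / 2 ≤ x) : 0 ≤ 2 * x - 1 := by linarith
  have hnonpos (x : ℝ) (hx : x < 1 / 2) : 2 * x - 1 ≤ 0 := by linarith
  have hdensity := withDensity_ofReal_eq_of_setIntegral_Ici_eq (fun x ↦ abs_nonneg (2 * x - 1))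
    (hint hμ).abs (hint hL).abs fun t ↦ by
      rw [setIntegral_Ici_abs_eq (hint hμ) hnonneg hnonpos,
        setIntegral_Ici_abs_eq (hint hL) hnonneg hnonpos, htail, htail]
  have hrestrict := Measure.restrict_eq_of_withDensity_eq (by fun_prop)
    (fun _ ↦ ENNReal.ofReal_ne_top) hdensity
  have hdensity_ne_zero : {x : ℝ | ENNReal.ofReal |2 * x - 1| ≠ 0} = {1 / 2}ᶜ := by
    ext x
    simp only [mem_ofPred_eq, ne_eq, ENNReal.ofReal_eq_zero, abs_nonpos_iff, sub_eq_zero,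
      mem_compl_iff, mem_singleton_iff]
    constructor <;> intro hx hx' <;> apply hx <;> linarith
  rw [hdensity_ne_zero] at hrestrict
  exact Measure.eq_of_restrict_compl_eq_of_measure_eq_zero (measurableSet_singleton _)
    (by simp [L]) hrestrict (by simp [L])

/-- **Corollary 1**: A random variable `U` taking values in `(0,1)` is uniformly
distributed on `(0,1)` if and only if `E[(2U−1)·1{U ≥ t}] − t(1−t) = 0` for every
`t ∈ (0,1)`. -/
theorem uniform_char_expectation
    {Ω : Type*} [MeasurableSpace Ω] (ℙ : Measure Ω) [IsProbabilityMeasure ℙ]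
    (U : Ω → ℝ) (hU : Measurable U) (hrange : ∀ ω, U ω ∈ Set.Ioo (0 : ℝ) 1) :
    ℙ.map U = volume.restrict (Set.Ioo (0 : ℝ) 1) ↔
      ∀ t ∈ Set.Ioo (0 : ℝ) 1,
        (∫ ω in {ω | t ≤ U ω}, (2 * U ω - 1) ∂ℙ) - t * (1 - t) = 0 := by
  have : IsProbabilityMeasure (ℙ.map U) := Measure.isProbabilityMeasure_map hU.aemeasurable
  have hlaw : ∀ᵐ x ∂(ℙ.map U), x ∈ Ioo (0 : ℝ) 1 :=
    (ae_map_iff hU.aemeasurable measurableSet_Ioo).2 (ae_of_all _ hrange)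
  have htail (t : ℝ) :
      ∫ ω in {ω | t ≤ U ω}, (2 * U ω - 1) ∂ℙ = ∫ x in Ici t, (2 * x - 1) ∂(ℙ.map U) :=
    (setIntegral_map measurableSet_Ici
      (by fun_prop : Measurable fun x : ℝ ↦ 2 * x - 1).aestronglyMeasurable hU.aemeasurable).symm
  simp only [htail, sub_eq_zero]
  exact eq_volume_restrict_Ioo_iff hlaw
end

section
/- For any n ≥ 1 and any real numbers u_1,…,u_n ∈ (0,1), the identity n·∫₀¹ | (1/n)·Σ_{j=1}^n (2u_j−1)·1{u_j ≥ t} − t(1−t) |² dt = (1/n)·Σ_{j=1}^n Σ_{k=1}^n (4u_j u_k − 2(u_j+u_k) + 1)·min(u_j,u_k) − (1/3)·Σ_{j=1}^n (2u_j−1)·u_j²·(3−2u_j) + n/30 holds. -/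
open MeasureTheory Set Finset

/-!
Write `S(t) = ∑_j (2u_j - 1) 1{t ≤ u_j}` and `g(t) = t(1-t)`, and expand
`n |S/n - g|² = S²/n - 2 S g + n g²`. Since `1{t ≤ a} 1{t ≤ b} = 1{t ≤ min a b}`, the square `S²`
is again a combination of step functions, so every term integrates over `(0,1)` in closed form:
`∫ 1{t ≤ a} = a`, `∫ 1{t ≤ a} g = a²/2 - a³/3` and `∫ g² = 1/30`.
-/

section StepFunction

variable {α R : Type*} [LinearOrder α] [MulZeroOneClass R]

lemma ite_le_mul_eq_indicator (a : α) (p : α → R) :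
    (fun t => (if t ≤ a then (1 : R) else 0) * p t) = (Iic a).indicator p := by
  ext t
  by_cases h : t ≤ a <;> simp [h]

lemma ite_le_mul_ite_le (a b t : α) :
    (if t ≤ a then (1 : R) else 0) * (if t ≤ b then (1 : R) else 0)
      = if t ≤ min a b then (1 : R) else 0 := by
  by_cases ha : t ≤ a <;> by_cases hb : t ≤ b <;> simp [ha, hb]

end StepFunction

lemma MeasureTheory.IntegrableOn.ite_le_mul {α : Type*} [LinearOrder α] [TopologicalSpace α]
    [OrderClosedTopology α] [MeasurableSpace α] [OpensMeasurableSpace α] {μ : Measure α}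
    {s : Set α} {p : α → ℝ} (hp : IntegrableOn p s μ) (a : α) :
    IntegrableOn (fun t => (if t ≤ a then (1 : ℝ) else 0) * p t) s μ := by
  rw [ite_le_mul_eq_indicator]
  exact hp.indicator measurableSet_Iic

lemma setIntegral_Ioo_ite_le_mul {a b x : ℝ} (hx : x ∈ Icc a b) (p : ℝ → ℝ) :
    ∫ t in Ioo a b, (if t ≤ x then (1 : ℝ) else 0) * p t = ∫ t in a..x, p t := by
  rw [← integral_Ioc_eq_integral_Ioo, ite_le_mul_eq_indicator, integral_indicator measurableSet_Iic,
    Measure.restrict_restrict measurableSet_Iic, Iic_inter_Ioc_of_le hx.2,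
    intervalIntegral.integral_of_le hx.1]

noncomputable def stepSum {ι : Type*} (s : Finset ι) (c u : ι → ℝ) (t : ℝ) : ℝ :=
  ∑ j ∈ s, c j * if t ≤ u j then (1 : ℝ) else 0

section StepSum

variable {ι : Type*} (s : Finset ι) (c u : ι → ℝ)

lemma stepSum_sq (t : ℝ) :
    stepSum s c u t ^ 2
      = stepSum (s ×ˢ s) (fun q => c q.1 * c q.2) (fun q => min (u q.1) (u q.2)) t := by
  rw [stepSum, stepSum, sq, sum_mul_sum, sum_product]
  refine sum_congr rfl fun j _ => sum_congr rfl fun k _ => ?_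
  rw [← ite_le_mul_ite_le]
  ring

lemma stepSum_mul (p : ℝ → ℝ) (t : ℝ) :
    stepSum s c u t * p t = ∑ j ∈ s, c j * ((if t ≤ u j then (1 : ℝ) else 0) * p t) := by
  simp_rw [stepSum, sum_mul, mul_assoc]

lemma MeasureTheory.IntegrableOn.stepSum_mul {μ : Measure ℝ} {A : Set ℝ} {p : ℝ → ℝ}
    (hp : IntegrableOn p A μ) : IntegrableOn (fun t => stepSum s c u t * p t) A μ := by
  simp_rw [_root_.stepSum_mul]
  exact integrable_finsetSum s fun j _ => (hp.ite_le_mul (u j)).const_mul (c j)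

lemma setIntegral_Ioo_stepSum_mul {a b : ℝ} (hu : ∀ j ∈ s, u j ∈ Icc a b) {p : ℝ → ℝ}
    (hp : IntegrableOn p (Ioo a b)) :
    ∫ t in Ioo a b, stepSum s c u t * p t = ∑ j ∈ s, c j * ∫ t in a..u j, p t := by
  simp_rw [_root_.stepSum_mul]
  rw [integral_finsetSum s fun j _ => (hp.ite_le_mul (u j)).const_mul (c j)]
  refine sum_congr rfl fun j hj => ?_
  rw [integral_const_mul, setIntegral_Ioo_ite_le_mul (hu j hj)]

end StepSum

lemma integral_mul_one_sub (a : ℝ) : ∫ t in (0 : ℝ)..a, t * (1 - t) = a ^ 2 / 2 - a ^ 3 / 3 := by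
  have hderiv (x : ℝ) : HasDerivAt (fun t : ℝ => t ^ 2 / 2 - t ^ 3 / 3) (x * (1 - x)) x :=
    (((hasDerivAt_pow 2 x).div_const 2).sub ((hasDerivAt_pow 3 x).div_const 3)).congr_deriv
      (by push_cast; ring)
  rw [intervalIntegral.integral_eq_sub_of_hasDerivAt (fun x _ => hderiv x)
    (Continuous.intervalIntegrable (by fun_prop) _ _)]
  ring

lemma integral_sq_mul_one_sub : ∫ t in (0 : ℝ)..1, (t * (1 - t)) ^ 2 = 1 / 30 := by
  have hderiv (x : ℝ) :
      HasDerivAt (fun t : ℝ => t ^ 3 / 3 - t ^ 4 / 2 + t ^ 5 / 5) ((x * (1 - x)) ^ 2) x :=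
    ((((hasDerivAt_pow 3 x).div_const 3).sub ((hasDerivAt_pow 4 x).div_const 2)).add
      ((hasDerivAt_pow 5 x).div_const 5)).congr_deriv (by push_cast; ring)
  rw [intervalIntegral.integral_eq_sub_of_hasDerivAt (fun x _ => hderiv x)
    (Continuous.intervalIntegrable (by fun_prop) _ _)]
  norm_num

lemma mul_setIntegral_Ioo_sq_abs_stepSum_sub {ι : Type*} (s : Finset ι) (c u : ι → ℝ)
    (hu : ∀ j ∈ s, u j ∈ Set.Icc 0 1) {x : ℝ} (hx : x ≠ 0) :
    x * ∫ t in Ioo 0 1, |(1 / x) * stepSum s c u t - t * (1 - t)| ^ 2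
      = (1 / x) * ∑ j ∈ s, ∑ k ∈ s, c j * c k * min (u j) (u k)
        - 2 * ∑ j ∈ s, c j * (u j ^ 2 / 2 - u j ^ 3 / 3) + x / 30 := by
  have hmin : ∀ q ∈ s ×ˢ s, min (u q.1) (u q.2) ∈ Set.Icc (0 : ℝ) 1 := by
    rintro ⟨j, k⟩ hjk
    obtain ⟨hj, hk⟩ := mem_product.1 hjk
    exact ⟨le_min (hu j hj).1 (hu k hk).1, min_le_of_left_le (hu j hj).2⟩
  have hcont {p : ℝ → ℝ} (hp : Continuous p) : IntegrableOn p (Ioo 0 1) :=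
    hp.integrableOn_Icc.mono_set Ioo_subset_Icc_self
  have hone : IntegrableOn (fun _ => (1 : ℝ)) (Ioo (0 : ℝ) 1) := hcont continuous_const
  have hg : IntegrableOn (fun t : ℝ => t * (1 - t)) (Ioo 0 1) := hcont (by fun_prop)
  have hg2 : IntegrableOn (fun t : ℝ => (t * (1 - t)) ^ 2) (Ioo 0 1) := hcont (by fun_prop)
  have hSS := (hone.stepSum_mul (s ×ˢ s) (fun q => c q.1 * c q.2)
    (fun q => min (u q.1) (u q.2))).const_mul (1 / x)
  have hSg := (hg.stepSum_mul s c u).const_mul 2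
  have hexpand (t : ℝ) : x * |(1 / x) * stepSum s c u t - t * (1 - t)| ^ 2
      = (1 / x) * (stepSum (s ×ˢ s) (fun q => c q.1 * c q.2) (fun q => min (u q.1) (u q.2)) t * 1)
        - 2 * (stepSum s c u t * (t * (1 - t))) + x * (t * (1 - t)) ^ 2 := by
    rw [sq_abs, mul_one, ← stepSum_sq]
    field_simp
    ring
  rw [← integral_const_mul]
  simp_rw [hexpand]
  rw [integral_add ?diff (hg2.const_mul x), integral_sub hSS hSg, integral_const_mul,
    integral_const_mul, integral_const_mul, setIntegral_Ioo_stepSum_mul _ _ _ hmin hone,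
    setIntegral_Ioo_stepSum_mul _ _ _ hu hg, ← integral_Ioc_eq_integral_Ioo,
    ← intervalIntegral.integral_of_le zero_le_one, integral_sq_mul_one_sub, sum_product]
  case diff => exact hSS.sub hSg
  simp_rw [intervalIntegral.integral_const, sub_zero, smul_eq_mul, mul_one, integral_mul_one_sub]
  ring

theorem test_statistic_computable_form_general
    (n : ℕ) (u : Fin n → ℝ) (hu : ∀ j, u j ∈ Set.Ioo (0 : ℝ) 1) :
    (n : ℝ) * ∫ t in Set.Ioo (0 : ℝ) 1,
        |(1 / (n : ℝ)) * ∑ j, (2 * u j - 1) * (if t ≤ u j then (1 : ℝ) else 0)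
          - t * (1 - t)| ^ 2
      = (1 / (n : ℝ)) * ∑ j, ∑ k,
            (4 * u j * u k - 2 * (u j + u k) + 1) * min (u j) (u k)
        - (1 / 3) * ∑ j, (2 * u j - 1) * (u j) ^ 2 * (3 - 2 * u j)
        + (n : ℝ) / 30 := by
  rcases n.eq_zero_or_pos with rfl | hn
  · simp
  have key := mul_setIntegral_Ioo_sq_abs_stepSum_sub univ (fun j => 2 * u j - 1) u
    (fun j _ => Ioo_subset_Icc_self (hu j)) (x := n) (by positivity)
  have hmix : ∑ j, ∑ k, (2 * u j - 1) * (2 * u k - 1) * min (u j) (u k)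
      = ∑ j, ∑ k, (4 * u j * u k - 2 * (u j + u k) + 1) * min (u j) (u k) :=
    sum_congr rfl fun j _ => sum_congr rfl fun k _ => by ring
  have hcubic : 2 * ∑ j, (2 * u j - 1) * (u j ^ 2 / 2 - u j ^ 3 / 3)
      = 1 / 3 * ∑ j, (2 * u j - 1) * u j ^ 2 * (3 - 2 * u j) := by
    simp_rw [mul_sum]
    exact sum_congr rfl fun j _ => by ring
  rw [← hmix, ← hcubic]
  exact key

/-- **Computable form of the test statistic `T_n`**: for `u_1, …, u_n ∈ (0,1)`,
`n·∫₀¹ |(1/n)·Σ_j (2u_j−1)·1{u_j ≥ t} − t(1−t)|² dt`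
equals
`(1/n)·Σ_j Σ_k (4u_ju_k − 2(u_j+u_k) + 1)·min(u_j,u_k) − (1/3)·Σ_j (2u_j−1)·u_j²·(3−2u_j) + n/30`. -/
theorem test_statistic_computable_form
    (n : ℕ) (hn : 1 ≤ n) (u : Fin n → ℝ) (hu : ∀ j, u j ∈ Set.Ioo (0 : ℝ) 1) :
    (n : ℝ) * ∫ t in Set.Ioo (0 : ℝ) 1,
        |(1 / (n : ℝ)) * ∑ j, (2 * u j - 1) * (if t ≤ u j then (1 : ℝ) else 0)
          - t * (1 - t)| ^ 2
      = (1 / (n : ℝ)) * ∑ j, ∑ k,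
            (4 * u j * u k - 2 * (u j + u k) + 1) * min (u j) (u k)
        - (1 / 3) * ∑ j, (2 * u j - 1) * (u j) ^ 2 * (3 - 2 * u j)
        + (n : ℝ) / 30 :=
  test_statistic_computable_form_general n u hu
end

section
/- Define the kernel K_Z(s,t) = (1 − (2·max(s,t) − 1)³)/6 − s·t·(1−s)·(1−t) for s,t ∈ (0,1). Then 2·∫₀¹∫₀¹ K_Z(s,t)² ds dt = 109/4050. -/
open MeasureTheory Set

/-! On either side of the diagonal `max s t` is `s` or `t`, so `KZ s t ^ 2` is a polynomial in `t`
with coefficients polynomial in `s` on `[0, s]` and on `[s, 1]`. Integrating the two pieces in `t`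
gives a polynomial of degree 8 in `s`, whose integral over `[0, 1]` is `109 / 8100`. -/

/-- The covariance kernel of the limiting Gaussian process. -/
noncomputable def KZ (s t : ℝ) : ℝ :=
  (1 - (2 * max s t - 1) ^ 3) / 6 - s * t * (1 - s) * (1 - t)

theorem intervalIntegral.integral_sum_mul_pow {n : ℕ} (c : Fin n → ℝ) (a b : ℝ) :
    ∫ x in a..b, ∑ k : Fin n, c k * x ^ (k : ℕ) =
      ∑ k : Fin n, c k * ((b ^ ((k : ℕ) + 1) - a ^ ((k : ℕ) + 1)) / ((k : ℕ) + 1)) := by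
  rw [intervalIntegral.integral_finsetSum fun k _ => by
    apply Continuous.intervalIntegrable; fun_prop]
  simp only [intervalIntegral.integral_const_mul, integral_pow]

theorem KZ_sq_of_le {s t : ℝ} (h : t ≤ s) :
    KZ s t ^ 2 = ∑ k : Fin 5, ![1/9 - 2/3*s + 7/3*s^2 - 44/9*s^3 + 20/3*s^4 - 16/3*s^5 + 16/9*s^6,
      -2/3*s + 8/3*s^2 - 6*s^3 + 20/3*s^4 - 8/3*s^5,
      2/3*s - 5/3*s^2 + 4*s^3 - 17/3*s^4 + 8/3*s^5,
      -2*s^2 + 4*s^3 - 2*s^4,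
      s^2 - 2*s^3 + s^4] k * t ^ (k : ℕ) := by
  simp only [KZ, max_eq_left h, Fin.sum_univ_succ, Fin.sum_univ_zero, Matrix.cons_val_zero,
    Matrix.cons_val_succ, Fin.val_zero, Fin.val_succ]
  ring

theorem KZ_sq_of_ge {s t : ℝ} (h : s ≤ t) :
    KZ s t ^ 2 = ∑ k : Fin 7, ![1/9, -2/3 - 2/3*s + 2/3*s^2,
      7/3 + 8/3*s - 5/3*s^2 - 2*s^3 + s^4,
      -44/9 - 6*s + 4*s^2 + 4*s^3 - 2*s^4,
      20/3 + 20/3*s - 17/3*s^2 - 2*s^3 + s^4,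
      -16/3 - 8/3*s + 8/3*s^2,
      16/9] k * t ^ (k : ℕ) := by
  simp only [KZ, max_eq_right h, Fin.sum_univ_succ, Fin.sum_univ_zero, Matrix.cons_val_zero,
    Matrix.cons_val_succ, Fin.val_zero, Fin.val_succ]
  ring

theorem integral_KZ_sq {s : ℝ} (hs : s ∈ Icc (0 : ℝ) 1) :
    ∫ t in (0 : ℝ)..1, KZ s t ^ 2 = ∑ k : Fin 9, ![2/63, -1/18, -11/45, 67/45, -33/10, 23/6,
      -35/18, -16/63, 4/9] k * s ^ (k : ℕ) := by
  have hint : ∀ a b : ℝ, IntervalIntegrable (fun t => KZ s t ^ 2) volume a b := fun a b =>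
    Continuous.intervalIntegrable (by unfold KZ; fun_prop) a b
  rw [← intervalIntegral.integral_add_adjacent_intervals (hint 0 s) (hint s 1),
    intervalIntegral.integral_congr fun t ht => KZ_sq_of_le (uIcc_of_le hs.1 ▸ ht).2,
    intervalIntegral.integral_congr fun t ht => KZ_sq_of_ge (uIcc_of_le hs.2 ▸ ht).1,
    intervalIntegral.integral_sum_mul_pow, intervalIntegral.integral_sum_mul_pow]
  simp only [Fin.sum_univ_succ, Fin.sum_univ_zero, Matrix.cons_val_zero, Matrix.cons_val_succ,
    Fin.val_zero, Fin.val_succ]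
  ring

/-- **Second cumulant (variance) of the limit distribution**:
`2·∫₀¹∫₀¹ K_Z(s,t)² ds dt = 109/4050`. -/
theorem second_cumulant_limit :
    2 * ∫ s in Set.Ioo (0 : ℝ) 1, ∫ t in Set.Ioo (0 : ℝ) 1, (KZ s t) ^ 2
      = 109 / 4050 := by
  have h01 : (0 : ℝ) ≤ 1 := zero_le_one
  simp_rw [← integral_Ioc_eq_integral_Ioo, ← intervalIntegral.integral_of_le h01]
  rw [intervalIntegral.integral_congr fun s hs => integral_KZ_sq (uIcc_of_le h01 ▸ hs),
    intervalIntegral.integral_sum_mul_pow]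
  norm_num [Fin.sum_univ_succ]
end

section
/- Define the kernel K_Z(s,t) = (1 − (2·max(s,t) − 1)³)/6 − s·t·(1−s)·(1−t) for s,t ∈ (0,1), let K_1 = K_Z, and define the iterated kernels K_j(s,t) = ∫₀¹ K_{j−1}(s,u)·K_Z(u,t) du for j ≥ 2. Then the third cumulant of the limiting null distribution, κ_3 = 2²·2!·∫₀¹ K_3(t,t) dt, equals 502883/40540500. -/
/-!
`K_Z(s, t)` is a polynomial on each of the triangles `s ≤ t` and `t ≤ s`, the two pieces differing
only through `max s t`. Splitting `∫₀¹ K_Z(s, u) K_Z(u, t) du` at `u = s` and `u = t` therefore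
expresses `K_2` on `s ≤ t` as a polynomial, and `K_2` is symmetric. Splitting
`K_3(t, t) = ∫₀¹ K_2(t, u) K_Z(u, t) du` at `u = t` then makes the diagonal of `K_3` a polynomial of
degree 12, whose integral over `(0, 1)` is the stated rational number. Every integral in the
argument is that of a polynomial and is evaluated monomial by monomial.
-/

open MeasureTheory Set

/-- The iterated kernels: `Kiter 1 = K_Z` (i.e. `K_1`) and, for `j ≥ 2`,
`K_j(s,t) = ∫₀¹ K_{j−1}(s,u)·K_Z(u,t) du`.  Here `Kiter j` represents `K_j`
(the value at `j = 0` is irrelevant). -/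
noncomputable def Kiter : ℕ → ℝ → ℝ → ℝ
  | 0, s, t => KZ s t
  | 1, s, t => KZ s t
  | (j + 2), s, t => ∫ u in Set.Ioo (0 : ℝ) 1, Kiter (j + 1) s u * KZ u t

-- `intervalIntegral.integral_const_mul` does not match the eta-reduced integrand `(c * ·)`.
theorem integral_const_mul_id (c a b : ℝ) : ∫ x in a..b, c * x = c * ((b ^ 2 - a ^ 2) / 2) := by
  rw [intervalIntegral.integral_const_mul, integral_id]

theorem setIntegral_Ioo_eq_intervalIntegral {E : Type*} [NormedAddCommGroup E] [NormedSpace ℝ E]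
    {f : ℝ → E} {a b : ℝ} (hab : a ≤ b) : ∫ x in Ioo a b, f x = ∫ x in a..b, f x := by
  rw [intervalIntegral.integral_of_le hab, integral_Ioc_eq_integral_Ioo]

noncomputable def kzBranch (m s t : ℝ) : ℝ :=
  (1 - (2 * m - 1) ^ 3) / 6 - s * t * (1 - s) * (1 - t)

theorem KZ_eq_kzBranch (s t : ℝ) : KZ s t = kzBranch (max s t) s t := rfl

theorem KZ_comm (s t : ℝ) : KZ s t = KZ t s := by
  unfold KZ
  rw [max_comm]
  ring

theorem Kiter_two (s t : ℝ) : Kiter 2 s t = ∫ u in Ioo 0 1, KZ s u * KZ u t := rfl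

theorem Kiter_three (s t : ℝ) : Kiter 3 s t = ∫ u in Ioo 0 1, Kiter 2 s u * KZ u t := rfl

theorem Kiter_two_comm (s t : ℝ) : Kiter 2 s t = Kiter 2 t s := by
  simp only [Kiter_two, KZ_comm s, KZ_comm _ t, mul_comm]

noncomputable def K2poly (s t : ℝ) : ℝ :=
  (2 / 63 - 1 / 36 * t - 5 / 36 * t ^ 2 + 11 / 18 * t ^ 3 - t ^ 4 + t ^ 5 - 2 / 3 * t ^ 6
      + 4 / 21 * t ^ 7)
    + s * (-1 / 36 + 1 / 30 * t - 1 / 30 * t ^ 2 + 1 / 6 * t ^ 3 - 7 / 12 * t ^ 4 + 2 / 3 * t ^ 5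
      - 2 / 9 * t ^ 6)
    + s ^ 2 * (-5 / 36 + 7 / 15 * t - 29 / 30 * t ^ 2 + 1 / 2 * t ^ 3 + 7 / 12 * t ^ 4
      - 2 / 3 * t ^ 5 + 2 / 9 * t ^ 6)
    + s ^ 3 * (4 / 9 - 7 / 6 * t + 5 / 2 * t ^ 2 - 16 / 9 * t ^ 3)
    + s ^ 4 * (-1 / 3 + 5 / 12 * t - 17 / 12 * t ^ 2 + 4 / 3 * t ^ 3)
    + s ^ 5 * (2 / 3 * t - 2 / 3 * t ^ 2)
    + s ^ 6 * (-2 / 9 * t + 2 / 9 * t ^ 2)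

theorem Kiter_two_of_le {s t : ℝ} (hs : 0 ≤ s) (hst : s ≤ t) (ht : t ≤ 1) :
    Kiter 2 s t = K2poly s t := by
  have hint (a b : ℝ) : IntervalIntegrable (fun u => KZ s u * KZ u t) volume a b :=
    Continuous.intervalIntegrable (by unfold KZ; fun_prop) a b
  have below : ∫ u in 0..s, KZ s u * KZ u t = ∫ u in 0..s, kzBranch s s u * kzBranch t u t :=
    intervalIntegral.integral_congr fun u hu => by
      rw [uIcc_of_le hs] at hu
      rw [KZ_eq_kzBranch, KZ_eq_kzBranch, max_eq_left hu.2, max_eq_right (hu.2.trans hst)]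
  have between : ∫ u in s..t, KZ s u * KZ u t = ∫ u in s..t, kzBranch u s u * kzBranch t u t :=
    intervalIntegral.integral_congr fun u hu => by
      rw [uIcc_of_le hst] at hu
      rw [KZ_eq_kzBranch, KZ_eq_kzBranch, max_eq_right hu.1, max_eq_right hu.2]
  have above : ∫ u in t..1, KZ s u * KZ u t = ∫ u in t..1, kzBranch u s u * kzBranch u u t :=
    intervalIntegral.integral_congr fun u hu => by
      rw [uIcc_of_le ht] at hu
      rw [KZ_eq_kzBranch, KZ_eq_kzBranch, max_eq_right (hst.trans hu.1), max_eq_left hu.1]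
  rw [Kiter_two, setIntegral_Ioo_eq_intervalIntegral zero_le_one,
    ← intervalIntegral.integral_add_adjacent_intervals (hint 0 t) (hint t 1),
    ← intervalIntegral.integral_add_adjacent_intervals (hint 0 s) (hint s t),
    below, between, above]
  simp only [kzBranch]
  ring_nf
  simp (disch := (apply Continuous.intervalIntegrable; fun_prop)) only
    [intervalIntegral.integral_add, intervalIntegral.integral_sub, intervalIntegral.integral_const_mul,
      intervalIntegral.integral_mul_const, integral_pow, integral_id, intervalIntegral.integral_const,
      integral_const_mul_id]
  unfold K2poly
  ring

theorem Kiter_two_eq_K2poly_min_max {s t : ℝ} (hs : s ∈ Icc 0 1) (ht : t ∈ Icc 0 1) :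
    Kiter 2 s t = K2poly (min s t) (max s t) := by
  rcases le_total s t with hst | hts
  · rw [min_eq_left hst, max_eq_right hst, Kiter_two_of_le hs.1 hst ht.2]
  · rw [min_eq_right hts, max_eq_left hts, Kiter_two_comm, Kiter_two_of_le ht.1 hts hs.2]

noncomputable def K3diagPoly (t : ℝ) : ℝ :=
  1823 / 498960 - 5 / 756 * t - 179 / 8100 * t ^ 2 + 1639 / 14175 * t ^ 3
    - 10741 / 113400 * t ^ 4 - 89 / 180 * t ^ 5 + 3019 / 1620 * t ^ 6 - 2441 / 756 * t ^ 7
    + 50131 / 15120 * t ^ 8 - 1513 / 756 * t ^ 9 + 1921 / 3780 * t ^ 10 + 1208 / 10395 * t ^ 11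
    - 212 / 2835 * t ^ 12

set_option maxHeartbeats 1000000 in
theorem Kiter_three_diag {t : ℝ} (ht : t ∈ Icc 0 1) : Kiter 3 t t = K3diagPoly t := by
  set f : ℝ → ℝ := fun u => K2poly (min t u) (max t u) * kzBranch (max u t) u t with hf
  have integrand : EqOn (fun u => Kiter 2 t u * KZ u t) f (Ioo 0 1) := fun u hu => by
    simp only [hf, Kiter_two_eq_K2poly_min_max ht (Ioo_subset_Icc_self hu), KZ_eq_kzBranch]
  have hint (a b : ℝ) : IntervalIntegrable f volume a b :=
    Continuous.intervalIntegrable (by simp only [hf, K2poly, kzBranch]; fun_prop) a b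
  have below : ∫ u in 0..t, f u = ∫ u in 0..t, K2poly u t * kzBranch t u t :=
    intervalIntegral.integral_congr fun u hu => by
      rw [uIcc_of_le ht.1] at hu
      simp only [hf, min_eq_right hu.2, max_eq_left hu.2, max_eq_right hu.2]
  have above : ∫ u in t..1, f u = ∫ u in t..1, K2poly t u * kzBranch u u t :=
    intervalIntegral.integral_congr fun u hu => by
      rw [uIcc_of_le ht.2] at hu
      simp only [hf, min_eq_left hu.1, max_eq_right hu.1, max_eq_left hu.1]
  rw [Kiter_three, setIntegral_congr_fun measurableSet_Ioo integrand,
    setIntegral_Ioo_eq_intervalIntegral zero_le_one,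
    ← intervalIntegral.integral_add_adjacent_intervals (hint 0 t) (hint t 1), below, above]
  simp only [K2poly, kzBranch]
  ring_nf
  simp (disch := (apply Continuous.intervalIntegrable; fun_prop)) only
    [intervalIntegral.integral_add, intervalIntegral.integral_const_mul,
      intervalIntegral.integral_mul_const, integral_pow, integral_id, intervalIntegral.integral_const,
      integral_const_mul_id]
  unfold K3diagPoly
  ring

/-- **Third cumulant of the limit distribution**:
`κ₃ = 2²·2!·∫₀¹ K₃(t,t) dt = 502883/40540500`. -/
theorem third_cumulant_limit :
    (2 : ℝ) ^ 2 * (Nat.factorial 2 : ℝ) * ∫ t in Set.Ioo (0 : ℝ) 1, Kiter 3 t t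
      = 502883 / 40540500 := by
  rw [setIntegral_congr_fun measurableSet_Ioo fun t ht => Kiter_three_diag (Ioo_subset_Icc_self ht),
    setIntegral_Ioo_eq_intervalIntegral zero_le_one]
  simp (disch := (apply Continuous.intervalIntegrable; fun_prop)) only
    [K3diagPoly, intervalIntegral.integral_add, intervalIntegral.integral_sub,
      intervalIntegral.integral_const_mul, integral_pow, integral_const_mul_id,
      intervalIntegral.integral_const, smul_eq_mul]
  norm_num [Nat.factorial]
end

section
/- Let U be a random variable taking values in (0,1) and define Δ = ∫₀¹ | 2·E[U·1{U ≥ t}] − P(U ≥ t) − t(1−t) |² dt. Then Δ = 0 if and only if U is uniformly distributed on (0,1), and Δ > 0 otherwise. -/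
/-!
Write `F_ρ(t) = ∫_{[t,∞)} (2u - 1) dρ(u)` and let `μ` be the law of `U`, `λ` the uniform law. Since
`F_λ(t) = t(1 - t)` on `(0,1)`, the integrand of `Δ` is `(F_μ(t) - F_λ(t))²`, so `Δ = 0` forces
`F_μ = F_λ` a.e. on `(0,1)`; tail integrals are left continuous, so they agree on all of `(0,1)`,
and for `t ≤ 0` both equal the right limit at `0`. Equal tail integrals of `f = 2u - 1` say that
the finite measures `f⁺μ + f⁻λ` and `f⁺λ + f⁻μ` agree on every `[t, ∞)`, hence coincide. Dividing
by the density gives `μ = λ` off `{1/2}`, and since both have mass one neither has an atom there.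
-/

open MeasureTheory Set Filter Topology

noncomputable def tailIntegral (μ : Measure ℝ) (f : ℝ → ℝ) (t : ℝ) : ℝ :=
  ∫ u in Ici t, f u ∂μ

lemma tendsto_setIntegral_of_eventually_mem_iff {α X : Type*} [MeasurableSpace X]
    {μ : Measure X} {f : X → ℝ} {l : Filter α} [l.IsCountablyGenerated] {s : α → Set X}
    {T : Set X} (hs : ∀ a, MeasurableSet (s a)) (hT : MeasurableSet T) (hf : Integrable f μ)
    (h : ∀ x, ∀ᶠ a in l, (x ∈ s a ↔ x ∈ T)) :
    Tendsto (fun a => ∫ x in s a, f x ∂μ) l (𝓝 (∫ x in T, f x ∂μ)) := by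
  simp_rw [← integral_indicator (hs _), ← integral_indicator hT]
  refine tendsto_integral_filter_of_dominated_convergence (‖f ·‖)
    (Eventually.of_forall fun a => hf.aestronglyMeasurable.indicator (hs a))
    (Eventually.of_forall fun a => ae_of_all _ fun x => norm_indicator_le_norm_self f x)
    hf.norm (ae_of_all _ fun x => tendsto_const_nhds.congr' ?_)
  filter_upwards [h x] with a ha
  by_cases hx : x ∈ T <;> simp [hx, ha]

lemma MeasureTheory.Measure.eq_of_restrict_compl_singleton_eq {α : Type*} [MeasurableSpace α]
    [MeasurableSingletonClass α] {μ ν : Measure α} [IsFiniteMeasure μ] (huniv : μ univ = ν univ)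
    {a : α} (h : μ.restrict {a}ᶜ = ν.restrict {a}ᶜ) : μ = ν := by
  have hcompl : μ {a}ᶜ = ν {a}ᶜ := by
    rw [← Measure.restrict_apply_self, h, Measure.restrict_apply_self]
  have ha : μ {a} = ν {a} := by
    rw [← ENNReal.add_left_inj (measure_ne_top μ {a}ᶜ), measure_add_measure_compl
      (measurableSet_singleton a), hcompl, measure_add_measure_compl (measurableSet_singleton a),
      huniv]
  rw [← Measure.restrict_add_restrict_compl (μ := μ) (measurableSet_singleton a),
    ← Measure.restrict_add_restrict_compl (μ := ν) (measurableSet_singleton a),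
    Measure.restrict_singleton, Measure.restrict_singleton, ha, h]

lemma eqOn_Ioo_of_ae_eq_of_tendsto_nhdsLT {β : Type*} [TopologicalSpace β] [T2Space β]
    {g h : ℝ → β} {a b : ℝ} (hae : g =ᵐ[volume.restrict (Ioo a b)] h)
    (hg : ∀ t ∈ Ioo a b, Tendsto g (𝓝[<] t) (𝓝 (g t)))
    (hh : ∀ t ∈ Ioo a b, Tendsto h (𝓝[<] t) (𝓝 (h t))) :
    EqOn g h (Ioo a b) := by
  intro t ht
  refine tendsto_nhds_unique_of_frequently_eq (hg t ht) (hh t ht) fun hne => ?_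
  obtain ⟨l, hl, hsub⟩ :=
    mem_nhdsLT_iff_exists_Ioo_subset.1 (hne.and (Ioo_mem_nhdsLT ht.1))
  have hnull : volume ({s | g s ≠ h s} ∩ Ioo a b) = 0 := by
    rw [← Measure.restrict_apply' measurableSet_Ioo]
    exact ae_iff.1 hae
  have hpos : volume (Ioo (max l a) t) ≠ 0 := by
    rw [Real.volume_Ioo, ENNReal.ofReal_ne_zero_iff, sub_pos]
    exact max_lt hl ht.1
  refine hpos (measure_mono_null (fun s hs => ?_) hnull)
  have hs' := hsub ⟨(le_max_left l a).trans_lt hs.1, hs.2⟩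
  exact ⟨hs'.1, (le_max_right l a).trans_lt hs.1, hs.2.trans ht.2⟩

section TailIntegral

variable {μ ν : Measure ℝ} {f : ℝ → ℝ}

lemma tailIntegral_neg :
    tailIntegral μ (fun x => -f x) = -tailIntegral μ f :=
  funext fun _ => integral_neg _

lemma tendsto_tailIntegral_nhdsLT (hf : Integrable f μ) (t : ℝ) :
    Tendsto (tailIntegral μ f) (𝓝[<] t) (𝓝 (tailIntegral μ f t)) := by
  refine tendsto_setIntegral_of_eventually_mem_iff (fun _ => measurableSet_Ici)
    measurableSet_Ici hf fun x => ?_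
  rcases le_or_gt t x with htx | hxt
  · filter_upwards [self_mem_nhdsWithin] with s hs
    simp only [mem_Ici, htx, iff_true]
    exact (le_of_lt hs).trans htx
  · filter_upwards [Ioo_mem_nhdsLT hxt] with s hs
    simp only [mem_Ici, not_le.2 hxt, not_le.2 hs.1]

lemma tendsto_tailIntegral_nhdsGT (hf : Integrable f μ) (t : ℝ) :
    Tendsto (tailIntegral μ f) (𝓝[>] t) (𝓝 (∫ x in Ioi t, f x ∂μ)) := by
  refine tendsto_setIntegral_of_eventually_mem_iff (fun _ => measurableSet_Ici)
    measurableSet_Ioi hf fun x => ?_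
  rcases lt_or_ge t x with htx | hxt
  · filter_upwards [Ioo_mem_nhdsGT htx] with s hs
    simp only [mem_Ici, mem_Ioi, hs.2.le, htx]
  · filter_upwards [self_mem_nhdsWithin] with s hs
    simp only [mem_Ici, mem_Ioi, not_lt.2 hxt, not_le.2 (hxt.trans_lt hs)]

lemma abs_tailIntegral_le (hf : Integrable f μ) (t : ℝ) :
    |tailIntegral μ f t| ≤ ∫ x, |f x| ∂μ :=
  (abs_integral_le_integral_abs).trans
    (setIntegral_le_integral hf.abs (ae_of_all _ fun _ => abs_nonneg _))

lemma measurable_tailIntegral [SFinite μ] (hf : Measurable f) :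
    Measurable (tailIntegral μ f) := by
  have hprod : StronglyMeasurable (Function.uncurry fun t u => (Ici t).indicator f u) := by
    have : (Function.uncurry fun t u => (Ici t).indicator f u)
        = {p : ℝ × ℝ | p.1 ≤ p.2}.indicator (f ∘ Prod.snd) := by
      ext ⟨t, u⟩; simp [indicator]
    rw [this]
    exact ((hf.comp measurable_snd).indicator
      (measurableSet_le measurable_fst measurable_snd)).stronglyMeasurable
  have : tailIntegral μ f = fun t => ∫ u, (Ici t).indicator f u ∂μ :=
    funext fun t => (integral_indicator measurableSet_Ici).symm
  rw [this]
  exact hprod.integral_prod_right.measurable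

lemma tailIntegral_eq_of_eqOn_Ioo {a b : ℝ} (hab : a < b)
    (hμ : ∀ᵐ x ∂μ, x ∈ Ioo a b) (hν : ∀ᵐ x ∂ν, x ∈ Ioo a b)
    (hfμ : Integrable f μ) (hfν : Integrable f ν)
    (h : EqOn (tailIntegral μ f) (tailIntegral ν f) (Ioo a b)) :
    tailIntegral μ f = tailIntegral ν f := by
  have below : ∀ {ρ : Measure ℝ}, (∀ᵐ x ∂ρ, x ∈ Ioo a b) →
      ∀ t ≤ a, tailIntegral ρ f t = ∫ x in Ioi a, f x ∂ρ := by
    intro ρ hρ t ht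
    rw [tailIntegral,
      Measure.restrict_eq_self_of_ae_mem (s := Ici t) (hρ.mono fun x hx => ht.trans hx.1.le),
      Measure.restrict_eq_self_of_ae_mem (s := Ioi a) (hρ.mono fun x hx => hx.1)]
  have above : ∀ {ρ : Measure ℝ}, (∀ᵐ x ∂ρ, x ∈ Ioo a b) → ∀ t, b ≤ t → tailIntegral ρ f t = 0 := by
    intro ρ hρ t ht
    rw [tailIntegral, Measure.restrict_eq_zero.2, integral_zero_measure]
    exact measure_eq_zero_iff_ae_notMem.2 (hρ.mono fun x hx hxt => (hx.2.trans_le ht).not_ge hxt)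
  funext t
  rcases le_or_gt t a with hta | hat
  · rw [below hμ t hta, below hν t hta]
    exact tendsto_nhds_unique_of_eventuallyEq (tendsto_tailIntegral_nhdsGT hfμ a)
      (tendsto_tailIntegral_nhdsGT hfν a) (eventuallyEq_of_mem (Ioo_mem_nhdsGT hab) h)
  rcases lt_or_ge t b with htb | hbt
  · exact h ⟨hat, htb⟩
  · rw [above hμ t hbt, above hν t hbt]

lemma restrict_pos_eq_of_tailIntegral_eq (hf : Measurable f)
    (hfμ : Integrable f μ) (hfν : Integrable f ν) (h : tailIntegral μ f = tailIntegral ν f) :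
    μ.restrict {x | 0 < f x} = ν.restrict {x | 0 < f x} := by
  set fp : ℝ → ENNReal := fun x => ENNReal.ofReal (f x)
  set fm : ℝ → ENNReal := fun x => ENNReal.ofReal (-f x)
  have := isFiniteMeasure_withDensity_ofReal hfμ.2
  have := isFiniteMeasure_withDensity_ofReal hfν.2
  have := isFiniteMeasure_withDensity_ofReal hfμ.neg.2
  have := isFiniteMeasure_withDensity_ofReal hfν.neg.2
  have hsum : μ.withDensity fp + ν.withDensity fm = ν.withDensity fp + μ.withDensity fm := by
    refine Measure.ext_of_Ici _ _ fun t => ?_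
    have ht := congr_fun h t
    simp only [tailIntegral,
      integral_eq_lintegral_pos_part_sub_lintegral_neg_part hfμ.integrableOn,
      integral_eq_lintegral_pos_part_sub_lintegral_neg_part hfν.integrableOn,
      ← withDensity_apply _ measurableSet_Ici] at ht
    simp only [Measure.add_apply]
    rw [← ENNReal.toReal_eq_toReal_iff' (by finiteness) (by finiteness),
      ENNReal.toReal_add (by finiteness) (by finiteness),
      ENNReal.toReal_add (by finiteness) (by finiteness)]
    linarith
  set S := {x | 0 < f x}
  have hS : MeasurableSet S := measurableSet_lt measurable_const hf
  have hfm : ∀ ρ : Measure ℝ, (ρ.withDensity fm).restrict S = 0 := fun ρ => by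
    rw [Measure.restrict_eq_zero, withDensity_apply_eq_zero' (by fun_prop)]
    convert measure_empty (μ := ρ)
    ext x
    simpa [fm, S] using fun hx => hx.le
  have hfp : (μ.restrict S).withDensity fp = (ν.restrict S).withDensity fp := by
    simpa only [Measure.restrict_add, hfm, add_zero, restrict_withDensity hS]
      using congr_arg (·.restrict S) hsum
  have hinv : ∀ ρ : Measure ℝ,
      ((ρ.restrict S).withDensity fp).withDensity (fun x => (fp x)⁻¹) = ρ.restrict S :=
    fun ρ => withDensity_inv_same (by fun_prop)
      ((ae_restrict_mem hS).mono fun x hx => (ENNReal.ofReal_pos.2 hx).ne')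
      (ae_of_all _ fun _ => ENNReal.ofReal_ne_top)
  rw [← hinv μ, hfp, hinv ν]

lemma restrict_ne_zero_eq_of_tailIntegral_eq (hf : Measurable f)
    (hfμ : Integrable f μ) (hfν : Integrable f ν) (h : tailIntegral μ f = tailIntegral ν f) :
    μ.restrict {x | f x ≠ 0} = ν.restrict {x | f x ≠ 0} := by
  have hsplit : {x | f x ≠ 0} = {x | 0 < f x} ∪ {x | 0 < -f x} := by
    ext x
    simp only [mem_ofPred_eq, mem_union, neg_pos, ne_iff_lt_or_gt, or_comm]
  have hdisj : Disjoint {x | 0 < f x} {x | 0 < -f x} :=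
    disjoint_left.2 fun x (hpos : 0 < f x) (hneg : 0 < -f x) => (neg_pos.1 hneg).not_gt hpos
  have hneg : tailIntegral μ (fun x => -f x) = tailIntegral ν (fun x => -f x) := by
    rw [tailIntegral_neg, tailIntegral_neg, h]
  rw [hsplit, Measure.restrict_union hdisj (measurableSet_lt measurable_const hf.neg),
    Measure.restrict_union hdisj (measurableSet_lt measurable_const hf.neg),
    restrict_pos_eq_of_tailIntegral_eq hf hfμ hfν h,
    restrict_pos_eq_of_tailIntegral_eq (f := fun x => -f x) hf.neg hfμ.neg hfν.neg hneg]

lemma integrableOn_sq_sub_tailIntegral [SFinite μ] [SFinite ν]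
    (hf : Measurable f) (hfμ : Integrable f μ) (hfν : Integrable f ν) {s : Set ℝ}
    (hs : volume s ≠ ⊤) :
    IntegrableOn (fun t => (tailIntegral μ f t - tailIntegral ν f t) ^ 2) s := by
  refine Measure.integrableOn_of_bounded (M := (∫ x, |f x| ∂μ + ∫ x, |f x| ∂ν) ^ 2) hs
    (((measurable_tailIntegral hf).sub (measurable_tailIntegral hf)).pow_const 2
      |>.aestronglyMeasurable)
    (ae_of_all _ fun t => ?_)
  rw [Real.norm_eq_abs, abs_pow, sq_le_sq₀ (abs_nonneg _) (by positivity)]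
  exact (abs_sub _ _).trans
    (add_le_add (abs_tailIntegral_le hfμ t) (abs_tailIntegral_le hfν t))

end TailIntegral

lemma integrable_two_mul_sub_one {μ : Measure ℝ} [IsFiniteMeasure μ]
    (hμ : ∀ᵐ x ∂μ, x ∈ Ioo (0 : ℝ) 1) : Integrable (fun x => 2 * x - 1) μ :=
  Integrable.of_bound (by fun_prop) 1 (hμ.mono fun x hx => by
    rw [Real.norm_eq_abs, abs_le]
    constructor <;> linarith [hx.1, hx.2])

lemma tailIntegral_uniform_two_mul_sub_one {t : ℝ} (ht : t ∈ Ioo (0 : ℝ) 1) :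
    tailIntegral (volume.restrict (Ioo 0 1)) (fun x => 2 * x - 1) t = t * (1 - t) := by
  have hIco : Ici t ∩ Ioo 0 1 = Ico t 1 := by
    ext x
    simp only [mem_inter_iff, mem_Ici, mem_Ioo, mem_Ico]
    exact ⟨fun h => ⟨h.1, h.2.2⟩, fun h => ⟨h.1, ht.1.trans_le h.1, h.2⟩⟩
  rw [tailIntegral, Measure.restrict_restrict measurableSet_Ici, hIco, integral_Ico_eq_integral_Ioo,
    ← integral_Ioc_eq_integral_Ioo, ← intervalIntegral.integral_of_le ht.2.le,
    intervalIntegral.integral_sub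
      ((by fun_prop : Continuous fun x : ℝ => 2 * x).intervalIntegrable _ _)
      intervalIntegrable_const,
    intervalIntegral.integral_const_mul]
  simp only [integral_id, intervalIntegral.integral_const, smul_eq_mul]
  ring

lemma tailIntegral_map_two_mul_sub_one {Ω : Type*} [MeasurableSpace Ω] {ℙ : Measure Ω}
    [IsFiniteMeasure ℙ] {U : Ω → ℝ} (hU : Measurable U) (hUint : Integrable U ℙ) (t : ℝ) :
    tailIntegral (ℙ.map U) (fun x => 2 * x - 1) t
      = 2 * (∫ ω in {ω | t ≤ U ω}, U ω ∂ℙ) - (ℙ {ω | t ≤ U ω}).toReal := by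
  have hid : Integrable (fun x => x) (ℙ.map U) :=
    (integrable_map_measure aestronglyMeasurable_id hU.aemeasurable).2 hUint
  rw [tailIntegral, integral_sub (hid.const_mul 2).integrableOn (integrable_const _),
    integral_const_mul, setIntegral_const,
    setIntegral_map (f := fun x => x) measurableSet_Ici aestronglyMeasurable_id hU.aemeasurable,
    measureReal_def, Measure.map_apply hU measurableSet_Ici, smul_eq_mul, mul_one]
  rfl

lemma eq_of_eqOn_tailIntegral_two_mul_sub_one {μ ν : Measure ℝ} [IsProbabilityMeasure μ]
    [IsProbabilityMeasure ν] (hμ : ∀ᵐ x ∂μ, x ∈ Ioo (0 : ℝ) 1) (hν : ∀ᵐ x ∂ν, x ∈ Ioo (0 : ℝ) 1)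
    (h : EqOn (tailIntegral μ fun x => 2 * x - 1) (tailIntegral ν fun x => 2 * x - 1) (Ioo 0 1)) :
    μ = ν := by
  have hall := tailIntegral_eq_of_eqOn_Ioo zero_lt_one hμ hν
    (integrable_two_mul_sub_one hμ) (integrable_two_mul_sub_one hν) h
  have hrestr := restrict_ne_zero_eq_of_tailIntegral_eq (by fun_prop)
    (integrable_two_mul_sub_one hμ) (integrable_two_mul_sub_one hν) hall
  have hset : {x : ℝ | 2 * x - 1 ≠ 0} = {1 / 2}ᶜ := by
    ext x
    simp only [mem_ofPred_eq, mem_compl_iff, mem_singleton_iff, sub_ne_zero]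
    constructor <;> intro hx hx' <;> apply hx <;> linarith
  rw [hset] at hrestr
  exact Measure.eq_of_restrict_compl_singleton_eq (by simp) hrestr

/-- **Consistency functional**: for a `(0,1)`-valued random variable `U`, the quantity
`Δ = ∫₀¹ |2·E[U·1{U ≥ t}] − P(U ≥ t) − t(1−t)|² dt` vanishes if and only if `U` is
uniformly distributed on `(0,1)`, and is strictly positive otherwise. -/
theorem Delta_eq_zero_iff_uniform
    {Ω : Type*} [MeasurableSpace Ω] (ℙ : Measure Ω) [IsProbabilityMeasure ℙ]
    (U : Ω → ℝ) (hU : Measurable U) (hrange : ∀ ω, U ω ∈ Set.Ioo (0 : ℝ) 1)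
    (Δ : ℝ)
    (hΔ : Δ = ∫ t in Set.Ioo (0 : ℝ) 1,
        |2 * (∫ ω in {ω | t ≤ U ω}, U ω ∂ℙ) - (ℙ {ω | t ≤ U ω}).toReal
          - t * (1 - t)| ^ 2) :
    (Δ = 0 ↔ ℙ.map U = volume.restrict (Set.Ioo (0 : ℝ) 1)) ∧
      (ℙ.map U ≠ volume.restrict (Set.Ioo (0 : ℝ) 1) → 0 < Δ) := by
  set μ := ℙ.map U
  have : IsProbabilityMeasure μ := Measure.isProbabilityMeasure_map hU.aemeasurable
  have : IsProbabilityMeasure (volume.restrict (Ioo (0 : ℝ) 1)) := ⟨by simp⟩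
  have hμ : ∀ᵐ x ∂μ, x ∈ Ioo (0 : ℝ) 1 :=
    (ae_map_iff hU.aemeasurable measurableSet_Ioo).2 (ae_of_all _ hrange)
  have hunif : ∀ᵐ x ∂volume.restrict (Ioo (0 : ℝ) 1), x ∈ Ioo (0 : ℝ) 1 :=
    ae_restrict_mem measurableSet_Ioo
  have hUint : Integrable U ℙ := Integrable.of_bound hU.aestronglyMeasurable 1
    (ae_of_all _ fun ω => by
      rw [Real.norm_eq_abs, abs_le]; constructor <;> linarith [(hrange ω).1, (hrange ω).2])
  have hΔF : Δ = ∫ t in Ioo 0 1, (tailIntegral μ (fun x => 2 * x - 1) t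
      - tailIntegral (volume.restrict (Ioo 0 1)) (fun x => 2 * x - 1) t) ^ 2 :=
    hΔ.trans (setIntegral_congr_fun measurableSet_Ioo fun t ht => by
      rw [← tailIntegral_map_two_mul_sub_one hU hUint, tailIntegral_uniform_two_mul_sub_one ht,
        sq_abs])
  have key : Δ = 0 ↔ μ = volume.restrict (Ioo 0 1) := by
    rw [hΔF, integral_eq_zero_iff_of_nonneg (fun _ => sq_nonneg _)
      (integrableOn_sq_sub_tailIntegral (by fun_prop) (integrable_two_mul_sub_one hμ)
        (integrable_two_mul_sub_one hunif) (by simp))]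
    refine ⟨fun h0 => eq_of_eqOn_tailIntegral_two_mul_sub_one hμ hunif ?_, fun h => ?_⟩
    · exact eqOn_Ioo_of_ae_eq_of_tendsto_nhdsLT
        (h0.mono fun t ht => sub_eq_zero.1 (pow_eq_zero_iff two_ne_zero |>.1 ht))
        (fun t _ => tendsto_tailIntegral_nhdsLT (integrable_two_mul_sub_one hμ) t)
        (fun t _ => tendsto_tailIntegral_nhdsLT (integrable_two_mul_sub_one hunif) t)
    · exact ae_of_all _ fun t => by simp [h]
  have hnonneg : 0 ≤ Δ := hΔF ▸ setIntegral_nonneg measurableSet_Ioo fun t _ => sq_nonneg _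
  exact ⟨key, fun hne => hnonneg.lt_of_ne' (mt key.1 hne)⟩
end

section
/- Let U have the Beta(2,2) distribution, i.e., density f(x) = 6x(1−x) on (0,1), and define Ψ(t) = E[(2U−1)·1{U ≥ t}] and K_W(s,t) = E[(2U−1)²·1{U ≥ max(s,t)}] − Ψ(s)·Ψ(t). Then for all s,t ∈ (0,1), writing m = max(s,t), K_W(s,t) = (24/5)m⁵ − 12m⁴ + 10m³ − 3m² − 9t²(t−1)²s²(s−1)² + 1/5. -/
/-! Pushing `P` forward along `U` turns each expectation over `{U ≥ t}` into
`∫ x in t..1, g x * 6x(1-x)`. Hence `Ψ t = 3t²(t-1)²`, and the second moment is a quintic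
polynomial in `max s t`; both come from explicit polynomial antiderivatives. -/

open MeasureTheory Set

theorem setIntegral_Ici_comp_eq_intervalIntegral_of_map_eq_withDensity
    {Ω : Type*} [MeasurableSpace Ω] {P : Measure Ω} {U : Ω → ℝ} (hU : Measurable U)
    {a b : ℝ} {f : ℝ → ℝ} (hf : Measurable f) (hf_nonneg : ∀ x ∈ Ioo a b, 0 ≤ f x)
    (hlaw : P.map U = (volume.restrict (Ioo a b)).withDensity (fun x => ENNReal.ofReal (f x)))
    {g : ℝ → ℝ} (hg : Measurable g) {t : ℝ} (hat : a < t) (htb : t ≤ b) :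
    ∫ ω in {ω | t ≤ U ω}, g (U ω) ∂P = ∫ x in t..b, g x * f x := by
  have hset : Ici t ∩ Ioo a b = Ico t b := by
    ext x
    simp only [mem_inter_iff, mem_Ici, mem_Ioo, mem_Ico]
    exact ⟨fun h => ⟨h.1, h.2.2⟩, fun h => ⟨h.1, hat.trans_le h.1, h.2⟩⟩
  have hsmul : EqOn (fun x => (f x).toNNReal • g x) (fun x => g x * f x) (Ico t b) := by
    intro x hx
    have hfx : 0 ≤ f x := hf_nonneg x (hset ▸ hx).2
    simp [NNReal.smul_def, Real.coe_toNNReal _ hfx, mul_comm]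
  change ∫ ω in U ⁻¹' Ici t, g (U ω) ∂P = _
  rw [← setIntegral_map measurableSet_Ici hg.aestronglyMeasurable hU.aemeasurable, hlaw]
  change ∫ x in Ici t, g x ∂(volume.restrict (Ioo a b)).withDensity
    (fun x => (f x).toNNReal) = _
  rw [setIntegral_withDensity_eq_setIntegral_smul hf.real_toNNReal _ measurableSet_Ici,
    Measure.restrict_restrict measurableSet_Ici, hset,
    setIntegral_congr_fun measurableSet_Ico hsmul,
    restrict_Ico_eq_restrict_Ioc, ← intervalIntegral.integral_of_le htb]

theorem integral_two_mul_sub_one_mul_beta22_density (t : ℝ) :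
    ∫ x in t..1, (2 * x - 1) * (6 * x * (1 - x)) = 3 * t ^ 2 * (t - 1) ^ 2 := by
  have hderiv : ∀ x ∈ uIcc t 1, HasDerivAt (fun x : ℝ => -3 * x ^ 4 + 6 * x ^ 3 - 3 * x ^ 2)
      ((2 * x - 1) * (6 * x * (1 - x))) x := fun x _ => by
    refine ((((hasDerivAt_pow 4 x).const_mul (-3)).add ((hasDerivAt_pow 3 x).const_mul 6)).sub
      ((hasDerivAt_pow 2 x).const_mul 3)).congr_deriv ?_
    push_cast
    ring
  rw [intervalIntegral.integral_eq_sub_of_hasDerivAt hderiv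
    (Continuous.intervalIntegrable (by fun_prop) _ _)]
  ring

theorem integral_two_mul_sub_one_sq_mul_beta22_density (t : ℝ) :
    ∫ x in t..1, (2 * x - 1) ^ 2 * (6 * x * (1 - x))
      = 24 / 5 * t ^ 5 - 12 * t ^ 4 + 10 * t ^ 3 - 3 * t ^ 2 + 1 / 5 := by
  have hderiv : ∀ x ∈ uIcc t 1, HasDerivAt
      (fun x : ℝ => -(24 / 5) * x ^ 5 + 12 * x ^ 4 - 10 * x ^ 3 + 3 * x ^ 2)
      ((2 * x - 1) ^ 2 * (6 * x * (1 - x))) x := fun x _ => by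
    refine (((((hasDerivAt_pow 5 x).const_mul (-(24 / 5))).add
      ((hasDerivAt_pow 4 x).const_mul 12)).sub ((hasDerivAt_pow 3 x).const_mul 10)).add
      ((hasDerivAt_pow 2 x).const_mul 3)).congr_deriv ?_
    push_cast
    ring
  rw [intervalIntegral.integral_eq_sub_of_hasDerivAt hderiv
    (Continuous.intervalIntegrable (by fun_prop) _ _)]
  ring

theorem beta_2_2_KW_general
    {Ω : Type*} [MeasurableSpace Ω] (P : Measure Ω)
    (U : Ω → ℝ) (hU : Measurable U)
    (hlaw : P.map U = (volume.restrict (Set.Ioo (0 : ℝ) 1)).withDensity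
      (fun x => ENNReal.ofReal (6 * x * (1 - x))))
    (Ψ : ℝ → ℝ) (KW : ℝ → ℝ → ℝ)
    (hΨ : ∀ t, Ψ t = ∫ ω in {ω | t ≤ U ω}, (2 * U ω - 1) ∂P)
    (hKW : ∀ s t, KW s t =
      (∫ ω in {ω | max s t ≤ U ω}, (2 * U ω - 1) ^ 2 ∂P) - Ψ s * Ψ t) :
    ∀ s ∈ Set.Ioo (0 : ℝ) 1, ∀ t ∈ Set.Ioo (0 : ℝ) 1,
      KW s t = (24 / 5) * (max s t) ^ 5 - 12 * (max s t) ^ 4 + 10 * (max s t) ^ 3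
        - 3 * (max s t) ^ 2 - 9 * t ^ 2 * (t - 1) ^ 2 * s ^ 2 * (s - 1) ^ 2
        + 1 / 5 := by
  have hdensity : ∀ x ∈ Ioo (0 : ℝ) 1, 0 ≤ 6 * x * (1 - x) := fun x hx => by
    nlinarith [hx.1, hx.2]
  have hexpect : ∀ {g : ℝ → ℝ}, Measurable g → ∀ u ∈ Ioo (0 : ℝ) 1,
      ∫ ω in {ω | u ≤ U ω}, g (U ω) ∂P = ∫ x in u..1, g x * (6 * x * (1 - x)) :=
    fun hg u hu => setIntegral_Ici_comp_eq_intervalIntegral_of_map_eq_withDensity hU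
      (by fun_prop) hdensity hlaw hg hu.1 hu.2.le
  have hΨ_eq : ∀ u ∈ Ioo (0 : ℝ) 1, Ψ u = 3 * u ^ 2 * (u - 1) ^ 2 := fun u hu => by
    rw [hΨ, hexpect (g := fun x => 2 * x - 1) (by fun_prop) u hu,
      integral_two_mul_sub_one_mul_beta22_density]
  intro s hs t ht
  have hmax : max s t ∈ Ioo (0 : ℝ) 1 := ⟨hs.1.trans_le (le_max_left s t), max_lt hs.2 ht.2⟩
  rw [hKW, hexpect (g := fun x => (2 * x - 1) ^ 2) (by fun_prop) _ hmax,
    integral_two_mul_sub_one_sq_mul_beta22_density, hΨ_eq s hs, hΨ_eq t ht]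
  ring

/-- **Example (a), Beta(2,2), covariance kernel**: if `U` has density `6x(1−x)` on
`(0,1)`, `Ψ(t) = E[(2U−1)·1{U ≥ t}]` and
`K_W(s,t) = E[(2U−1)²·1{U ≥ max(s,t)}] − Ψ(s)Ψ(t)`, then for all `s,t ∈ (0,1)`,
with `m = max(s,t)`,
`K_W(s,t) = (24/5)m⁵ − 12m⁴ + 10m³ − 3m² − 9t²(t−1)²s²(s−1)² + 1/5`. -/
theorem beta_2_2_KW
    {Ω : Type*} [MeasurableSpace Ω] (P : Measure Ω) [IsProbabilityMeasure P]
    (U : Ω → ℝ) (hU : Measurable U)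
    (hlaw : P.map U = (volume.restrict (Set.Ioo (0 : ℝ) 1)).withDensity
      (fun x => ENNReal.ofReal (6 * x * (1 - x))))
    (Ψ : ℝ → ℝ) (KW : ℝ → ℝ → ℝ)
    (hΨ : ∀ t, Ψ t = ∫ ω in {ω | t ≤ U ω}, (2 * U ω - 1) ∂P)
    (hKW : ∀ s t, KW s t =
      (∫ ω in {ω | max s t ≤ U ω}, (2 * U ω - 1) ^ 2 ∂P) - Ψ s * Ψ t) :
    ∀ s ∈ Set.Ioo (0 : ℝ) 1, ∀ t ∈ Set.Ioo (0 : ℝ) 1,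
      KW s t = (24 / 5) * (max s t) ^ 5 - 12 * (max s t) ^ 4 + 10 * (max s t) ^ 3
        - 3 * (max s t) ^ 2 - 9 * t ^ 2 * (t - 1) ^ 2 * s ^ 2 * (s - 1) ^ 2
        + 1 / 5 :=
  beta_2_2_KW_general P U hU hlaw Ψ KW hΨ hKW
end

section
/- Let U have the Beta(2,3) distribution, i.e., density f(x) = 12x(1−x)² on (0,1), and define Ψ(t) = E[(2U−1)·1{U ≥ t}], z(t) = Ψ(t) − t(1−t), and K_W(s,t) = E[(2U−1)²·1{U ≥ max(s,t)}] − Ψ(s)·Ψ(t). Then σ² = 4·∫₀¹∫₀¹ K_W(s,t)·z(s)·z(t) ds dt = 13088573/2948195250. -/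
/-!
With `w(x) = (2x − 1)² f(x)` and `Z(x) = ∫₀ˣ z`, the kernel is
`K_W(s,t) = ∫_{max(s,t)}^1 w − Ψ(s) Ψ(t)`, and its quadratic form is
`∫∫ K_W(s,t) z(s) z(t) = ∫₀¹ w Z² − (∫₀¹ Ψ z)²`, the variance of `(2U − 1) Z(U)`:
split the inner integral at `t = s` and integrate by parts once.
For Beta(2,3) the functions `Ψ`, `z`, `Z` are polynomials, and the two remaining integrals
are `170699/153153000` and `1/462`.
-/

open MeasureTheory Set

theorem integral_eq_sum_monomials {n : ℕ} {f : ℝ → ℝ} (c : Fin n → ℝ)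
    (hf : ∀ x, f x = ∑ i, c i * x ^ (i : ℕ)) (a b : ℝ) :
    ∫ x in a..b, f x = ∑ i, c i * (b ^ ((i : ℕ) + 1) - a ^ ((i : ℕ) + 1)) / ((i : ℕ) + 1) := by
  simp_rw [hf]
  rw [intervalIntegral.integral_finsetSum fun i _ =>
    (by fun_prop : Continuous fun x : ℝ => c i * x ^ (i : ℕ)).intervalIntegrable a b]
  simp [integral_pow, mul_div_assoc]

theorem Continuous.integral_hasDerivAt_left {f : ℝ → ℝ} (hf : Continuous f) (b x : ℝ) :
    HasDerivAt (fun u => ∫ y in u..b, f y) (-f x) x :=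
  intervalIntegral.integral_hasDerivAt_left (hf.intervalIntegrable _ _)
    (hf.stronglyMeasurableAtFilter _ _) hf.continuousAt

theorem setIntegral_le_comp_eq_integral_mul_density {Ω : Type*} [MeasurableSpace Ω]
    {P : Measure Ω} {U : Ω → ℝ} (hU : Measurable U) {a b : ℝ} {f : ℝ → ℝ} (hf : Measurable f)
    (hf0 : ∀ x ∈ Ioo a b, 0 ≤ f x)
    (hlaw : P.map U = (volume.restrict (Ioo a b)).withDensity fun x => ENNReal.ofReal (f x))
    {g : ℝ → ℝ} (hg : Measurable g) {c : ℝ} (hc : c ∈ Ioo a b) :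
    ∫ ω in {ω | c ≤ U ω}, g (U ω) ∂P = ∫ x in c..b, g x * f x := by
  have hIco : Ici c ∩ Ioo a b = Ico c b := by
    ext x
    simp only [mem_inter_iff, mem_Ici, mem_Ioo, mem_Ico]
    exact ⟨fun h => ⟨h.1, h.2.2⟩, fun h => ⟨h.1, hc.1.trans_le h.1, h.2⟩⟩
  calc ∫ ω in {ω | c ≤ U ω}, g (U ω) ∂P
      = ∫ x in Ici c, g x ∂(P.map U) :=
        (setIntegral_map measurableSet_Ici hg.aestronglyMeasurable hU.aemeasurable).symm
    _ = ∫ x in Ico c b, (ENNReal.ofReal (f x)).toReal • g x := by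
        rw [hlaw, setIntegral_withDensity_eq_setIntegral_toReal_smul (by fun_prop)
          (ae_of_all _ fun _ => ENNReal.ofReal_lt_top) _ measurableSet_Ici,
          Measure.restrict_restrict measurableSet_Ici, hIco]
    _ = ∫ x in Ico c b, g x * f x :=
        setIntegral_congr_fun measurableSet_Ico fun x hx => by
          rw [ENNReal.toReal_ofReal (hf0 x ⟨hc.1.trans_le hx.1, hx.2⟩), smul_eq_mul, mul_comm]
    _ = ∫ x in c..b, g x * f x := by
        rw [integral_Ico_eq_integral_Ioo, ← integral_Ioc_eq_integral_Ioo,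
          intervalIntegral.integral_of_le hc.2.le]

section MaxKernel

variable {a b : ℝ}

theorem integral_comp_max_mul {m φ : ℝ → ℝ} (hm : Continuous m) (hφ : Continuous φ)
    {s : ℝ} (hs : s ∈ Icc a b) :
    ∫ t in a..b, m (max s t) * φ t = m s * (∫ t in a..s, φ t) + ∫ t in s..b, m t * φ t := by
  have hint : ∀ c d, IntervalIntegrable (fun t => m (max s t) * φ t) volume c d :=
    fun c d => (by fun_prop : Continuous fun t => m (max s t) * φ t).intervalIntegrable c d
  rw [← intervalIntegral.integral_add_adjacent_intervals (hint a s) (hint s b)]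
  congr 1
  · rw [← intervalIntegral.integral_const_mul]
    refine intervalIntegral.integral_congr fun t ht => ?_
    rw [uIcc_of_le hs.1] at ht
    simp [max_eq_left ht.2]
  · refine intervalIntegral.integral_congr fun t ht => ?_
    rw [uIcc_of_le hs.2] at ht
    simp [max_eq_right ht.1]

theorem integral_mul_primitive_add {m w φ : ℝ → ℝ} (hw : Continuous w)
    (hφ : Continuous φ) (hm : ∀ x, HasDerivAt m (-w x) x) (hmb : m b = 0) :
    ∫ s in a..b, φ s * (m s * (∫ t in a..s, φ t) + ∫ t in s..b, m t * φ t)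
      = ∫ x in a..b, w x * (∫ t in a..x, φ t) ^ 2 := by
  set Φ := fun x => ∫ t in a..x, φ t
  set R := fun x => ∫ t in x..b, m t * φ t
  have hmc : Continuous m := continuous_iff_continuousAt.2 fun x => (hm x).continuousAt
  have hΦ : ∀ x, HasDerivAt Φ (φ x) x := fun x => (hφ.integral_hasStrictDerivAt a x).hasDerivAt
  have hR : ∀ x, HasDerivAt R (-(m x * φ x)) x := (hmc.mul hφ).integral_hasDerivAt_left b
  have hΦc : Continuous Φ := continuous_iff_continuousAt.2 fun x => (hΦ x).continuousAt
  have hRc : Continuous R := continuous_iff_continuousAt.2 fun x => (hR x).continuousAt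
  -- `φ (m Φ + R) = (Φ R + m Φ²)' + w Φ²`, and `Φ R + m Φ²` vanishes at both ends.
  have hF : ∀ x, HasDerivAt (fun x => Φ x * R x + m x * Φ x ^ 2)
      (φ x * (m x * Φ x + R x) - w x * Φ x ^ 2) x := fun x => by
    refine (((hΦ x).fun_mul (hR x)).fun_add ((hm x).fun_mul ((hΦ x).fun_pow 2))).congr_deriv ?_
    ring
  have hF' : IntervalIntegrable (fun s => φ s * (m s * Φ s + R s) - w s * Φ s ^ 2) volume a b :=
    (by fun_prop : Continuous _).intervalIntegrable a b
  have hwΦ : IntervalIntegrable (fun x => w x * Φ x ^ 2) volume a b :=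
    (hw.mul (hΦc.pow 2)).intervalIntegrable a b
  calc ∫ s in a..b, φ s * (m s * Φ s + R s)
      = (∫ s in a..b, (φ s * (m s * Φ s + R s) - w s * Φ s ^ 2))
          + ∫ s in a..b, w s * Φ s ^ 2 := by
        rw [← intervalIntegral.integral_add hF' hwΦ]
        simp
    _ = ∫ x in a..b, w x * Φ x ^ 2 := by
        rw [intervalIntegral.integral_eq_sub_of_hasDerivAt (fun x _ => hF x) hF']
        simp [Φ, R, hmb]

theorem integral_integral_max_kernel (hab : a ≤ b) {w φ ψ : ℝ → ℝ} (hw : Continuous w)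
    (hφ : Continuous φ) (hψ : Continuous ψ) :
    ∫ s in a..b, ∫ t in a..b, ((∫ x in max s t..b, w x) - ψ s * ψ t) * φ s * φ t
      = (∫ x in a..b, w x * (∫ t in a..x, φ t) ^ 2) - (∫ x in a..b, ψ x * φ x) ^ 2 := by
  set m := fun c => ∫ x in c..b, w x
  have hm : ∀ x, HasDerivAt m (-w x) x := hw.integral_hasDerivAt_left b
  have hmc : Continuous m := continuous_iff_continuousAt.2 fun x => (hm x).continuousAt
  have hΦc : Continuous fun s => ∫ t in a..s, φ t :=
    intervalIntegral.continuous_primitive (fun _ _ => hφ.intervalIntegrable _ _) a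
  have hRc : Continuous fun s => ∫ t in s..b, m t * φ t :=
    continuous_iff_continuousAt.2 fun x =>
      ((hmc.mul hφ).integral_hasDerivAt_left b x).continuousAt
  have hinner : ∀ s ∈ uIcc a b, ∫ t in a..b, (m (max s t) - ψ s * ψ t) * φ s * φ t
      = φ s * (m s * (∫ t in a..s, φ t) + ∫ t in s..b, m t * φ t)
        - (ψ s * φ s) * ∫ t in a..b, ψ t * φ t := by
    intro s hs
    rw [uIcc_of_le hab] at hs
    rw [← integral_comp_max_mul hmc hφ hs, ← intervalIntegral.integral_const_mul,
      ← intervalIntegral.integral_const_mul, ← intervalIntegral.integral_sub]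
    · congr 1; ext t; ring
    · exact (by fun_prop : Continuous fun t => φ s * (m (max s t) * φ t)).intervalIntegrable a b
    · exact (by fun_prop : Continuous fun t => ψ s * φ s * (ψ t * φ t)).intervalIntegrable a b
  rw [intervalIntegral.integral_congr hinner, intervalIntegral.integral_sub,
    intervalIntegral.integral_mul_const, integral_mul_primitive_add hw hφ hm (by simp [m])]
  · ring
  · exact (by fun_prop : Continuous fun s =>
      φ s * (m s * (∫ t in a..s, φ t) + ∫ t in s..b, m t * φ t)).intervalIntegrable a b
  · exact (by fun_prop : Continuous fun s =>
      ψ s * φ s * ∫ t in a..b, ψ t * φ t).intervalIntegrable a b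

end MaxKernel

namespace Beta23

noncomputable def psi (t : ℝ) : ℝ := -1 / 5 + 6 * t ^ 2 - 16 * t ^ 3 + 15 * t ^ 4 - 24 / 5 * t ^ 5

noncomputable def z (t : ℝ) : ℝ := psi t - t * (1 - t)

noncomputable def zPrimitive (x : ℝ) : ℝ :=
  -x / 5 - x ^ 2 / 2 + 7 / 3 * x ^ 3 - 4 * x ^ 4 + 3 * x ^ 5 - 4 / 5 * x ^ 6

theorem continuous_psi : Continuous psi := by
  unfold psi
  fun_prop

theorem continuous_z : Continuous z :=
  continuous_psi.sub (by fun_prop)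

theorem integral_psi (t : ℝ) : ∫ x in t..1, (2 * x - 1) * (12 * x * (1 - x) ^ 2) = psi t := by
  rw [integral_eq_sum_monomials ![0, -12, 48, -60, 24]
    (fun x => by simp [Fin.sum_univ_succ]; ring)]
  simp [Fin.sum_univ_succ, psi]
  ring

theorem integral_z (x : ℝ) : ∫ t in 0..x, z t = zPrimitive x := by
  rw [integral_eq_sum_monomials ![-1 / 5, -1, 7, -16, 15, -24 / 5]
    (fun x => by simp [Fin.sum_univ_succ, z, psi]; ring)]
  simp [Fin.sum_univ_succ, zPrimitive]
  ring

theorem integral_mul_zPrimitive_sq :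
    ∫ x in 0..1, (2 * x - 1) ^ 2 * (12 * x * (1 - x) ^ 2) * zPrimitive x ^ 2
      = 170699 / 153153000 := by
  rw [integral_eq_sum_monomials ![0, 0, 0, 12 / 25, -12 / 25, -409 / 25, 1646 / 25, 1369 / 75,
      -21404 / 25, 244912 / 75, -177572 / 25, 784204 / 75, -273816 / 25, 205692 / 25,
      -108592 / 25, 38256 / 25, -8064 / 25, 768 / 25]
    (fun x => by simp [Fin.sum_univ_succ, zPrimitive]; ring)]
  norm_num [Fin.sum_univ_succ]

theorem integral_psi_mul_z : ∫ x in 0..1, psi x * z x = 1 / 462 := by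
  rw [integral_eq_sum_monomials ![1 / 25, 1 / 5, -13 / 5, 2 / 5, 52, -5527 / 25, 2279 / 5,
      -2712 / 5, 1893 / 5, -144, 576 / 25]
    (fun x => by simp [Fin.sum_univ_succ, z, psi]; ring)]
  norm_num [Fin.sum_univ_succ]

end Beta23

theorem beta_2_3_sigma_sq_general
    {Ω : Type*} [MeasurableSpace Ω] (P : Measure Ω)
    (U : Ω → ℝ) (hU : Measurable U)
    (hlaw : P.map U = (volume.restrict (Set.Ioo (0 : ℝ) 1)).withDensity
      (fun x => ENNReal.ofReal (12 * x * (1 - x) ^ 2)))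
    (Ψ z : ℝ → ℝ) (KW : ℝ → ℝ → ℝ)
    (hΨ : ∀ t, Ψ t = ∫ ω in {ω | t ≤ U ω}, (2 * U ω - 1) ∂P)
    (hz : ∀ t, z t = Ψ t - t * (1 - t))
    (hKW : ∀ s t, KW s t =
      (∫ ω in {ω | max s t ≤ U ω}, (2 * U ω - 1) ^ 2 ∂P) - Ψ s * Ψ t) :
    4 * ∫ s in Set.Ioo (0 : ℝ) 1, ∫ t in Set.Ioo (0 : ℝ) 1, KW s t * z s * z t
      = 13088573 / 2948195250 := by
  have hmoment : ∀ {g : ℝ → ℝ}, Measurable g → ∀ c ∈ Ioo (0 : ℝ) 1,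
      ∫ ω in {ω | c ≤ U ω}, g (U ω) ∂P = ∫ x in c..1, g x * (12 * x * (1 - x) ^ 2) :=
    fun hg c hc => setIntegral_le_comp_eq_integral_mul_density hU (by fun_prop)
      (fun x hx => by have := hx.1; positivity) hlaw hg hc
  have hΨ_eq : ∀ t ∈ Ioo (0 : ℝ) 1, Ψ t = Beta23.psi t := fun t ht => by
    rw [hΨ, hmoment (g := fun x => 2 * x - 1) (by fun_prop) t ht, Beta23.integral_psi]
  have hIoo : ∫ s in Ioo (0 : ℝ) 1, ∫ t in Ioo (0 : ℝ) 1, KW s t * z s * z t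
      = ∫ s in 0..1, ∫ t in 0..1,
          ((∫ x in max s t..1, (2 * x - 1) ^ 2 * (12 * x * (1 - x) ^ 2))
            - Beta23.psi s * Beta23.psi t) * Beta23.z s * Beta23.z t := by
    simp only [intervalIntegral.integral_of_le zero_le_one, integral_Ioc_eq_integral_Ioo]
    refine setIntegral_congr_fun measurableSet_Ioo fun s hs =>
      setIntegral_congr_fun measurableSet_Ioo fun t ht => ?_
    rw [hKW, hz, hz, hΨ_eq s hs, hΨ_eq t ht, Beta23.z, Beta23.z,
      hmoment (g := fun x => (2 * x - 1) ^ 2) (by fun_prop) _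
        ⟨lt_max_of_lt_left hs.1, max_lt hs.2 ht.2⟩]
  rw [hIoo, integral_integral_max_kernel zero_le_one (by fun_prop) Beta23.continuous_z
    Beta23.continuous_psi]
  simp_rw [Beta23.integral_z]
  rw [Beta23.integral_mul_zPrimitive_sq, Beta23.integral_psi_mul_z]
  norm_num

/-- **Example (b), Beta(2,3), limiting variance**: if `U` has density `12x(1−x)²` on
`(0,1)`, `Ψ(t) = E[(2U−1)·1{U ≥ t}]`, `z(t) = Ψ(t) − t(1−t)` and
`K_W(s,t) = E[(2U−1)²·1{U ≥ max(s,t)}] − Ψ(s)Ψ(t)`, then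
`σ² = 4·∫₀¹∫₀¹ K_W(s,t)·z(s)·z(t) ds dt = 13088573/2948195250`. -/
theorem beta_2_3_sigma_sq
    {Ω : Type*} [MeasurableSpace Ω] (P : Measure Ω) [IsProbabilityMeasure P]
    (U : Ω → ℝ) (hU : Measurable U)
    (hlaw : P.map U = (volume.restrict (Set.Ioo (0 : ℝ) 1)).withDensity
      (fun x => ENNReal.ofReal (12 * x * (1 - x) ^ 2)))
    (Ψ z : ℝ → ℝ) (KW : ℝ → ℝ → ℝ)
    (hΨ : ∀ t, Ψ t = ∫ ω in {ω | t ≤ U ω}, (2 * U ω - 1) ∂P)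
    (hz : ∀ t, z t = Ψ t - t * (1 - t))
    (hKW : ∀ s t, KW s t =
      (∫ ω in {ω | max s t ≤ U ω}, (2 * U ω - 1) ^ 2 ∂P) - Ψ s * Ψ t) :
    4 * ∫ s in Set.Ioo (0 : ℝ) 1, ∫ t in Set.Ioo (0 : ℝ) 1, KW s t * z s * z t
      = 13088573 / 2948195250 :=
  beta_2_3_sigma_sq_general P U hU hlaw Ψ z KW hΨ hz hKW
end

section
/- Let U have the Beta(1,1/2) distribution, i.e., density f(x) = (1/2)(1−x)^{−1/2} on (0,1), and define Ψ(t) = E[(2U−1)·1{U ≥ t}], z(t) = Ψ(t) − t(1−t), and K_W(s,t) = E[(2U−1)²·1{U ≥ max(s,t)}] − Ψ(s)·Ψ(t). Then σ² = 4·∫₀¹∫₀¹ K_W(s,t)·z(s)·z(t) ds dt = 426456598/10854718875. -/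
/-!
`Beta(1,1/2)` is the law of `1 - V²` for `V` uniform on `(0,1)`. The substitution `t = 1 - u²`
therefore turns `Ψ`, `E[(2U-1)²·1{U ≥ t}]` and `z` into polynomials in `u`, and `max s t` into
`min u v` of the new variables. Splitting the inner integral at the diagonal, the double integral
becomes an iterated integral of polynomials, evaluated exactly.
-/

open MeasureTheory Set

lemma setIntegral_preimage_eq_of_map_eq_withDensity {Ω : Type*} [MeasurableSpace Ω]
    {P : Measure Ω} {U : Ω → ℝ} (hU : Measurable U) {μ : Measure ℝ} {f : ℝ → ℝ}
    (hf : Measurable f) (hf0 : ∀ᵐ x ∂μ, 0 ≤ f x)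
    (hlaw : P.map U = μ.withDensity (fun x => ENNReal.ofReal (f x)))
    {g : ℝ → ℝ} (hg : Measurable g) {s : Set ℝ} (hs : MeasurableSet s) :
    ∫ ω in U ⁻¹' s, g (U ω) ∂P = ∫ x in s, f x * g x ∂μ := by
  rw [← setIntegral_map hs hg.aestronglyMeasurable hU.aemeasurable, hlaw,
    setIntegral_withDensity_eq_setIntegral_toReal_smul hf.ennreal_ofReal
      (ae_of_all _ fun _ => ENNReal.ofReal_lt_top) g hs]
  refine setIntegral_congr_ae hs (hf0.mono fun x hx _ => ?_)
  rw [ENNReal.toReal_ofReal hx, smul_eq_mul]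

lemma image_one_sub_sq_Ioo {c : ℝ} (hc : 0 ≤ c) :
    (fun u : ℝ => 1 - u ^ 2) '' Ioo 0 c = Ioo (1 - c ^ 2) 1 := by
  ext x
  constructor
  · rintro ⟨u, ⟨hu0, huc⟩, rfl⟩
    exact ⟨by nlinarith, by nlinarith⟩
  · rintro ⟨hcx, hx1⟩
    have hx : 0 < 1 - x := by linarith
    refine ⟨√(1 - x), ⟨Real.sqrt_pos.2 hx, ?_⟩, by simp [Real.sq_sqrt hx.le]⟩
    rw [Real.sqrt_lt' (by nlinarith)]
    linarith

lemma setIntegral_Ioo_one_sub_sq (g : ℝ → ℝ) {c : ℝ} (hc : 0 ≤ c) :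
    ∫ x in Ioo (1 - c ^ 2) 1, g x = ∫ u in Ioo 0 c, 2 * u * g (1 - u ^ 2) := by
  have hderiv : ∀ u ∈ Ioo 0 c,
      HasDerivWithinAt (fun u : ℝ => 1 - u ^ 2) (-(2 * u)) (Ioo 0 c) u :=
    fun u _ => by simpa using ((hasDerivAt_pow 2 u).const_sub 1).hasDerivWithinAt
  have hinj : InjOn (fun u : ℝ => 1 - u ^ 2) (Ioo 0 c) := fun u hu w hw huw =>
    (sq_eq_sq₀ hu.1.le hw.1.le).1 (by simpa using huw)
  rw [← image_one_sub_sq_Ioo hc,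
    integral_image_eq_integral_abs_deriv_smul measurableSet_Ioo hderiv hinj]
  refine setIntegral_congr_fun measurableSet_Ioo fun u hu => ?_
  rw [abs_neg, abs_of_pos (by linarith [hu.1]), smul_eq_mul]

lemma setIntegral_Ioo_zero_one_eq (g : ℝ → ℝ) :
    ∫ x in Ioo 0 1, g x = ∫ u in Ioo 0 1, 2 * u * g (1 - u ^ 2) := by
  simpa using setIntegral_Ioo_one_sub_sq g zero_le_one

lemma Ici_inter_Ioo_of_lt {a b m : ℝ} (h : a < m) : Ici m ∩ Ioo a b = Ico m b := by
  ext x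
  simp only [mem_inter_iff, mem_Ici, mem_Ioo, mem_Ico]
  exact ⟨fun hx => ⟨hx.1, hx.2.2⟩, fun hx => ⟨hx.1, h.trans_le hx.1, hx.2⟩⟩

lemma setIntegral_comp_of_beta_one_half {Ω : Type*} [MeasurableSpace Ω] {P : Measure Ω}
    {U : Ω → ℝ} (hU : Measurable U)
    (hlaw : P.map U = (volume.restrict (Ioo (0 : ℝ) 1)).withDensity
      (fun x => ENNReal.ofReal ((1 / 2) * (1 - x) ^ (-(1 / 2) : ℝ))))
    {g : ℝ → ℝ} (hg : Measurable g) {c : ℝ} (hc : c ∈ Ico 0 1) :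
    ∫ ω in {ω | 1 - c ^ 2 ≤ U ω}, g (U ω) ∂P = ∫ u in 0..c, g (1 - u ^ 2) := by
  have hdensity : ∀ᵐ x ∂volume.restrict (Ioo (0 : ℝ) 1),
      0 ≤ (1 / 2) * (1 - x) ^ (-(1 / 2) : ℝ) :=
    (ae_restrict_mem measurableSet_Ioo).mono fun x hx => by
      have : 0 ≤ 1 - x := by linarith [hx.2]
      positivity
  have hc2 : 0 < 1 - c ^ 2 := by nlinarith [hc.1, hc.2]
  rw [show {ω | 1 - c ^ 2 ≤ U ω} = U ⁻¹' Ici (1 - c ^ 2) from rfl,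
    setIntegral_preimage_eq_of_map_eq_withDensity hU (by fun_prop) hdensity hlaw hg
      measurableSet_Ici,
    Measure.restrict_restrict measurableSet_Ici, Ici_inter_Ioo_of_lt hc2,
    integral_Ico_eq_integral_Ioo, setIntegral_Ioo_one_sub_sq _ hc.1,
    intervalIntegral.integral_of_le hc.1, integral_Ioc_eq_integral_Ioo]
  refine setIntegral_congr_fun measurableSet_Ioo fun u hu => ?_
  have hu : 0 < u := hu.1
  rw [sub_sub_cancel, Real.rpow_neg (sq_nonneg u), ← Real.sqrt_eq_rpow, Real.sqrt_sq hu.le]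
  field_simp

lemma intervalIntegral_comp_min (h : ℝ → ℝ → ℝ) (hh : Continuous (Function.uncurry h))
    {a b v : ℝ} (hv : v ∈ Icc a b) :
    ∫ w in a..b, h (min v w) w = (∫ w in a..v, h w w) + ∫ w in v..b, h v w := by
  have hcont : Continuous fun w => h (min v w) w :=
    hh.comp ((continuous_const.min continuous_id).prodMk continuous_id)
  rw [← intervalIntegral.integral_add_adjacent_intervals (hcont.intervalIntegrable a v)
    (hcont.intervalIntegrable v b)]
  congr 1
  · refine intervalIntegral.integral_congr fun w hw => ?_
    rw [uIcc_of_le hv.1] at hw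
    simp only [min_eq_right hw.2]
  · refine intervalIntegral.integral_congr fun w hw => ?_
    rw [uIcc_of_le hv.2] at hw
    simp only [min_eq_left hw.1]

/- In the variables `u = √(1 - s)`, `v = √(1 - t)`, the functions `Ψ(s)`, `E[(2U-1)²·1{U ≥ s}]`,
`z(s)` and `K_W(s,t)` become `psiPoly u`, `sqMomentPoly u`, `zPoly u` and `kernelPoly u v`. -/

noncomputable def psiPoly (u : ℝ) : ℝ := u - 2 / 3 * u ^ 3

noncomputable def sqMomentPoly (u : ℝ) : ℝ := u - 4 / 3 * u ^ 3 + 4 / 5 * u ^ 5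

noncomputable def zPoly (u : ℝ) : ℝ := psiPoly u - (1 - u ^ 2) * u ^ 2

noncomputable def kernelPoly (u v : ℝ) : ℝ := sqMomentPoly (min u v) - psiPoly u * psiPoly v

lemma integral_eq_psiPoly (c : ℝ) : ∫ u in 0..c, (2 * (1 - u ^ 2) - 1) = psiPoly c := by
  ring_nf
  simp (disch := (apply Continuous.intervalIntegrable; fun_prop))
    [intervalIntegral.integral_sub, psiPoly]
  ring

lemma integral_sq_eq_sqMomentPoly (c : ℝ) :
    ∫ u in 0..c, (2 * (1 - u ^ 2) - 1) ^ 2 = sqMomentPoly c := by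
  ring_nf
  simp (disch := (apply Continuous.intervalIntegrable; fun_prop))
    [intervalIntegral.integral_add, intervalIntegral.integral_sub, sqMomentPoly]
  ring

lemma setIntegral_kernelPoly_mul_zPoly :
    ∫ v in Ioo 0 1, 2 * v * ∫ w in Ioo 0 1, 2 * w * (kernelPoly v w * zPoly v * zPoly w)
      = 213228299 / 21709437750 := by
  unfold kernelPoly
  have hsplit : ∀ v ∈ Ioo (0 : ℝ) 1, ∫ w in Ioo 0 1, 2 * w *
      ((sqMomentPoly (min v w) - psiPoly v * psiPoly w) * zPoly v * zPoly w)
      = (∫ w in 0..v, 2 * w * ((sqMomentPoly w - psiPoly v * psiPoly w) * zPoly v * zPoly w))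
        + ∫ w in v..1, 2 * w * ((sqMomentPoly v - psiPoly v * psiPoly w) * zPoly v * zPoly w) :=
    fun v hv => by
      rw [← integral_Ioc_eq_integral_Ioo, ← intervalIntegral.integral_of_le zero_le_one]
      exact intervalIntegral_comp_min
        (fun m w => 2 * w * ((sqMomentPoly m - psiPoly v * psiPoly w) * zPoly v * zPoly w))
        (by simp only [psiPoly, sqMomentPoly, zPoly]; fun_prop) ⟨hv.1.le, hv.2.le⟩
  rw [setIntegral_congr_fun measurableSet_Ioo fun v hv => congrArg (2 * v * ·) (hsplit v hv),
    ← integral_Ioc_eq_integral_Ioo, ← intervalIntegral.integral_of_le zero_le_one]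
  simp only [psiPoly, sqMomentPoly, zPoly]
  -- Expand and integrate termwise twice: first the inner integrals, which become polynomials
  -- in `v`, then the outer one.
  ring_nf
  simp (disch := (apply Continuous.intervalIntegrable; fun_prop)) only
    [intervalIntegral.integral_add, intervalIntegral.integral_sub,
      intervalIntegral.integral_mul_const, intervalIntegral.integral_const_mul, integral_pow]
  ring_nf
  simp (disch := (apply Continuous.intervalIntegrable; fun_prop)) only
    [intervalIntegral.integral_add, intervalIntegral.integral_mul_const, integral_pow]
  norm_num

lemma max_one_sub_sq {v w : ℝ} (hv : 0 ≤ v) (hw : 0 ≤ w) :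
    max (1 - v ^ 2) (1 - w ^ 2) = 1 - min v w ^ 2 := by
  rcases le_total v w with h | h
  · rw [min_eq_left h, max_eq_left (by nlinarith)]
  · rw [min_eq_right h, max_eq_right (by nlinarith)]

theorem beta_1_half_sigma_sq_general
    {Ω : Type*} [MeasurableSpace Ω] (P : Measure Ω)
    (U : Ω → ℝ) (hU : Measurable U)
    (hlaw : P.map U = (volume.restrict (Set.Ioo (0 : ℝ) 1)).withDensity
      (fun x => ENNReal.ofReal ((1 / 2) * (1 - x) ^ (-(1 / 2) : ℝ))))
    (Ψ z : ℝ → ℝ) (KW : ℝ → ℝ → ℝ)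
    (hΨ : ∀ t, Ψ t = ∫ ω in {ω | t ≤ U ω}, (2 * U ω - 1) ∂P)
    (hz : ∀ t, z t = Ψ t - t * (1 - t))
    (hKW : ∀ s t, KW s t =
      (∫ ω in {ω | max s t ≤ U ω}, (2 * U ω - 1) ^ 2 ∂P) - Ψ s * Ψ t) :
    4 * ∫ s in Set.Ioo (0 : ℝ) 1, ∫ t in Set.Ioo (0 : ℝ) 1, KW s t * z s * z t
      = 426456598 / 10854718875 := by
  have hΨ' : ∀ u ∈ Ico (0 : ℝ) 1, Ψ (1 - u ^ 2) = psiPoly u := fun u hu => by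
    rw [hΨ, setIntegral_comp_of_beta_one_half hU hlaw (g := fun x => 2 * x - 1) (by fun_prop) hu,
      integral_eq_psiPoly]
  have hz' : ∀ u ∈ Ico (0 : ℝ) 1, z (1 - u ^ 2) = zPoly u := fun u hu => by
    rw [hz, hΨ' u hu, zPoly]
    ring
  have hKW' : ∀ v ∈ Ico (0 : ℝ) 1, ∀ w ∈ Ico (0 : ℝ) 1,
      KW (1 - v ^ 2) (1 - w ^ 2) = kernelPoly v w := by
    intro v hv w hw
    rw [hKW, max_one_sub_sq hv.1 hw.1,
      setIntegral_comp_of_beta_one_half hU hlaw (g := fun x => (2 * x - 1) ^ 2) (by fun_prop)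
        ⟨le_min hv.1 hw.1, min_lt_of_left_lt hv.2⟩,
      integral_sq_eq_sqMomentPoly, hΨ' v hv, hΨ' w hw, kernelPoly]
  have hsubst : ∀ v ∈ Ioo (0 : ℝ) 1,
      2 * v * ∫ t in Ioo 0 1, KW (1 - v ^ 2) t * z (1 - v ^ 2) * z t
        = 2 * v * ∫ w in Ioo 0 1, 2 * w * (kernelPoly v w * zPoly v * zPoly w) := by
    intro v hv
    rw [setIntegral_Ioo_zero_one_eq]
    refine congrArg (2 * v * ·) (setIntegral_congr_fun measurableSet_Ioo fun w hw => ?_)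
    rw [hKW' v (Ioo_subset_Ico_self hv) w (Ioo_subset_Ico_self hw),
      hz' v (Ioo_subset_Ico_self hv), hz' w (Ioo_subset_Ico_self hw)]
  rw [setIntegral_Ioo_zero_one_eq, setIntegral_congr_fun measurableSet_Ioo hsubst,
    setIntegral_kernelPoly_mul_zPoly]
  norm_num

/-- **Example (c), Beta(1,1/2), limiting variance**: if `U` has density `(1/2)(1−x)^{−1/2}` on
`(0,1)`, `Ψ(t) = E[(2U−1)·1{U ≥ t}]`, `z(t) = Ψ(t) − t(1−t)` and
`K_W(s,t) = E[(2U−1)²·1{U ≥ max(s,t)}] − Ψ(s)Ψ(t)`, then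
`σ² = 4·∫₀¹∫₀¹ K_W(s,t)·z(s)·z(t) ds dt = 426456598/10854718875`. -/
theorem beta_1_half_sigma_sq
    {Ω : Type*} [MeasurableSpace Ω] (P : Measure Ω) [IsProbabilityMeasure P]
    (U : Ω → ℝ) (hU : Measurable U)
    (hlaw : P.map U = (volume.restrict (Set.Ioo (0 : ℝ) 1)).withDensity
      (fun x => ENNReal.ofReal ((1 / 2) * (1 - x) ^ (-(1 / 2) : ℝ))))
    (Ψ z : ℝ → ℝ) (KW : ℝ → ℝ → ℝ)
    (hΨ : ∀ t, Ψ t = ∫ ω in {ω | t ≤ U ω}, (2 * U ω - 1) ∂P)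
    (hz : ∀ t, z t = Ψ t - t * (1 - t))
    (hKW : ∀ s t, KW s t =
      (∫ ω in {ω | max s t ≤ U ω}, (2 * U ω - 1) ^ 2 ∂P) - Ψ s * Ψ t) :
    4 * ∫ s in Set.Ioo (0 : ℝ) 1, ∫ t in Set.Ioo (0 : ℝ) 1, KW s t * z s * z t
      = 426456598 / 10854718875 :=
  beta_1_half_sigma_sq_general P U hU hlaw Ψ z KW hΨ hz hKW
end
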